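/- arXiv:1910.13433 — 8 statements merged into one kernel-verified Lean document; each statement's English description precedes it below -/
import Mathlib

section
/- Let F be an increasing family on a finite set X with q_f(F) ≤ q. Then there is a probability measure ν on 2^X supported on F that is (2q)-spread, i.e., ν({T : T ⊇ S}) ≤ (2q)^{|S|} for every S ⊆ X. -/
open Finset

open scoped Classical in
/-- If `q_f(F) ≤ q` (i.e. `F` is weakly `p`-small for no `p > q`), then there is a
probability measure `ν` on `2^X` supported on `F` which is `(2q)`-spread:
`ν({T : T ⊇ S}) ≤ (2q)^{|S|}` for all `S ⊆ X`. -/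
theorem stmt4 {α : Type*} [Fintype α] [DecidableEq α] (F : Finset (Finset α)) (q : ℝ)
    (hq : 0 ≤ q)
    (hinc : ∀ A ∈ F, ∀ B : Finset α, A ⊆ B → B ∈ F)
    (hqf : ∀ p : ℝ, q < p →
      ¬ ∃ g : Finset α → ℝ, (∀ S, 0 ≤ g S) ∧
          (∀ T ∈ F, 1 ≤ ∑ S ∈ T.powerset, g S) ∧
          ∑ S : Finset α, g S * p ^ S.card ≤ 1 / 2) :
    ∃ ν : Finset α → ℝ, (∀ S, 0 ≤ ν S) ∧ (∑ S : Finset α, ν S = 1) ∧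
      (∀ S, S ∉ F → ν S = 0) ∧
      ∀ S : Finset α,
        (∑ T ∈ Finset.univ.filter (fun T : Finset α => S ⊆ T), ν T) ≤ (2 * q) ^ S.card := by
  -- F is nonempty
  have hFne : F.Nonempty := by
    by_contra hemp
    rw [Finset.not_nonempty_iff_eq_empty] at hemp
    refine hqf (q + 1) (by linarith) ⟨0, fun S => le_refl 0, ?_, ?_⟩
    · intro T hT; simp [hemp] at hT
    · simp
  by_contra hcon
  -- The set Δ of probability vectors supported on F
  set Δ : Set (Finset α → ℝ) :=
    {y | (∀ T, 0 ≤ y T) ∧ (∀ T, T ∉ F → y T = 0) ∧ ∑ T : Finset α, y T = 1} with hΔ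
  -- The linear map L
  set L : (Finset α → ℝ) →ₗ[ℝ] (Finset α → ℝ) :=
    { toFun := fun y S => ∑ T ∈ Finset.univ.filter (fun T : Finset α => S ⊆ T), y T / 2
      map_add' := by
        intro y z; funext S
        simp [Finset.sum_add_distrib, add_div]
      map_smul' := by
        intro c y; funext S
        simp [Finset.mul_sum, mul_div_assoc] } with hL
  set A : Set (Finset α → ℝ) := L '' Δ with hA
  set B : Set (Finset α → ℝ) := {x | ∀ S : Finset α, x S ≤ q ^ S.card} with hB
  -- Δ is convex
  have hΔconv : Convex ℝ Δ := by
    intro y hy z hz a b ha hb hab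
    refine ⟨fun T => by
      simp only [Pi.add_apply, Pi.smul_apply, smul_eq_mul]
      have := hy.1 T; have := hz.1 T; positivity, fun T hT => by
      simp only [Pi.add_apply, Pi.smul_apply, smul_eq_mul, hy.2.1 T hT, hz.2.1 T hT,
        mul_zero, add_zero], ?_⟩
    simp only [Pi.add_apply, Pi.smul_apply, smul_eq_mul]
    rw [Finset.sum_add_distrib, ← Finset.mul_sum, ← Finset.mul_sum, hy.2.2, hz.2.2]
    linarith
  -- Δ is compact
  have hΔcl : IsClosed Δ := by
    have h1 : IsClosed {y : Finset α → ℝ | ∀ T, 0 ≤ y T} := by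
      have : {y : Finset α → ℝ | ∀ T, 0 ≤ y T} = ⋂ T, {y | 0 ≤ y T} := by
        ext y; simp [Set.mem_iInter]
      rw [this]
      exact isClosed_iInter fun T => isClosed_le continuous_const (continuous_apply T)
    have h2 : IsClosed {y : Finset α → ℝ | ∀ T, T ∉ F → y T = 0} := by
      have : {y : Finset α → ℝ | ∀ T, T ∉ F → y T = 0} =
          ⋂ T ∈ {T | T ∉ F}, {y : Finset α → ℝ | y T = 0} := by
        ext y; simp [Set.mem_iInter]
      rw [this]
      exact isClosed_biInter fun T _ => isClosed_eq (continuous_apply T) continuous_const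
    have h3 : IsClosed {y : Finset α → ℝ | ∑ T : Finset α, y T = 1} :=
      isClosed_eq (continuous_finset_sum _ (fun T _ => continuous_apply T)) continuous_const
    have : Δ = {y : Finset α → ℝ | ∀ T, 0 ≤ y T} ∩
        ({y | ∀ T, T ∉ F → y T = 0} ∩ {y | ∑ T : Finset α, y T = 1}) := by
      ext y; simp [hΔ, Set.mem_setOf_eq, and_assoc]
    rw [this]
    exact h1.inter (h2.inter h3)
  have hΔcpt : IsCompact Δ := by
    refine (isCompact_univ_pi (fun T : Finset α => isCompact_Icc (a := (0:ℝ)) (b := 1))).of_isClosed_subset hΔcl ?_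
    intro y hy
    simp only [Set.mem_univ_pi, Set.mem_Icc]
    intro T
    refine ⟨hy.1 T, ?_⟩
    calc y T ≤ ∑ T' : Finset α, y T' :=
          Finset.single_le_sum (fun T' _ => hy.1 T') (Finset.mem_univ T)
      _ = 1 := hy.2.2
  have hAconv : Convex ℝ A := hΔconv.linear_image L
  have hAcpt : IsCompact A := hΔcpt.image L.continuous_of_finiteDimensional
  have hBconv : Convex ℝ B := by
    intro x hx z hz a b ha hb hab S
    simp only [Pi.add_apply, Pi.smul_apply, smul_eq_mul]
    calc a * x S + b * z S ≤ a * q ^ S.card + b * q ^ S.card := by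
          have := hx S; have := hz S; nlinarith
      _ = q ^ S.card := by rw [← add_mul, hab, one_mul]
  have hBcl : IsClosed B := by
    have : B = ⋂ S : Finset α, {x : Finset α → ℝ | x S ≤ q ^ S.card} := by
      ext x; simp [hB, Set.mem_iInter]
    rw [this]
    exact isClosed_iInter fun S => isClosed_le (continuous_apply S) continuous_const
  -- Disjointness, from hcon
  have hdisj : Disjoint A B := by
    rw [Set.disjoint_left]
    rintro x ⟨y, hy, rfl⟩ hxB
    refine hcon ⟨y, hy.1, hy.2.2, hy.2.1, ?_⟩
    intro S
    have hxS := hxB S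
    have hLy : L y S = (∑ T ∈ Finset.univ.filter (fun T : Finset α => S ⊆ T), y T) / 2 := by
      simp [hL, Finset.sum_div]
    rcases Nat.eq_zero_or_pos S.card with h0 | h1
    · rw [Finset.card_eq_zero] at h0
      subst h0
      have : Finset.univ.filter (fun T : Finset α => (∅ : Finset α) ⊆ T) = Finset.univ := by
        ext T; simp
      rw [this, hy.2.2]
      simp
    · have : (∑ T ∈ Finset.univ.filter (fun T : Finset α => S ⊆ T), y T) ≤ 2 * q ^ S.card := by
        rw [hLy] at hxS; linarith
      calc (∑ T ∈ Finset.univ.filter (fun T : Finset α => S ⊆ T), y T)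
          ≤ 2 * q ^ S.card := this
        _ ≤ 2 ^ S.card * q ^ S.card := by
            have h2 : (2:ℝ) ≤ 2 ^ S.card := by
              calc (2:ℝ) = 2 ^ 1 := (pow_one 2).symm
                _ ≤ 2 ^ S.card := pow_le_pow_right₀ one_le_two h1
            have : (0:ℝ) ≤ q ^ S.card := pow_nonneg hq _
            nlinarith
        _ = (2 * q) ^ S.card := (mul_pow 2 q S.card).symm
  -- Hahn-Banach separation
  obtain ⟨f, u, v, hfa, huv, hfb⟩ :=
    geometric_hahn_banach_compact_closed hAconv hAcpt hBconv hBcl hdisj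
  -- coefficients of f
  set e : Finset α → (Finset α → ℝ) := fun S j => if S = j then 1 else 0 with he
  set g0 : Finset α → ℝ := fun S => -(f (e S)) with hg0
  have hfx : ∀ x : Finset α → ℝ, f x = -∑ S : Finset α, x S * g0 S := by
    intro x
    conv_lhs => rw [pi_eq_sum_univ x]
    rw [map_sum]
    simp only [map_smul, smul_eq_mul, hg0, he]
    rw [← Finset.sum_neg_distrib]
    congr 1; funext S; ring
  -- g0 is nonnegative
  have hg0nn : ∀ S, 0 ≤ g0 S := by
    intro S
    by_contra hneg
    push_neg at hneg
    have hfS : 0 < f (e S) := by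
      have : f (e S) = -g0 S := by simp [hg0]
      rw [this]; linarith
    set c : Finset α → ℝ := fun S => q ^ S.card with hc
    have hcB : c ∈ B := fun S' => le_refl _
    set M : ℝ := (f c - v) / f (e S) with hM
    have hMnn : 0 ≤ M := by
      have := hfb c hcB
      apply div_nonneg <;> linarith
    have hbB : c - M • e S ∈ B := by
      intro S'
      simp only [Pi.sub_apply, Pi.smul_apply, smul_eq_mul, hc]
      have : 0 ≤ M * e S S' := by
        apply mul_nonneg hMnn
        rw [he]
        rcases eq_or_ne S S' with rfl | h
        · simp
        · simp [h]
      linarith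
    have := hfb _ hbB
    rw [map_sub, map_smul] at this
    simp only [smul_eq_mul, hM] at this
    rw [div_mul_cancel₀ _ (ne_of_gt hfS)] at this
    linarith
  -- key inequality
  set c : Finset α → ℝ := fun S => q ^ S.card with hc
  have hcB : c ∈ B := fun S' => le_refl _
  have hfc : f c = -∑ S : Finset α, g0 S * q ^ S.card := by
    rw [hfx, neg_inj]
    apply Finset.sum_congr rfl
    intro S _
    simp only [hc]
    ring
  have hkey : ∀ T ∈ F, ∑ S : Finset α, g0 S * q ^ S.card <
      (1/2) * ∑ S ∈ T.powerset, g0 S := by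
    intro T hT
    have hyΔ : e T ∈ Δ := by
      refine ⟨fun T' => ?_, fun T' hT' => ?_, by simp [he]⟩
      · rw [he]; dsimp only
        rcases eq_or_ne T T' with rfl | h
        · simp
        · simp [h]
      · have : T ≠ T' := fun h => hT' (h ▸ hT)
        simp [he, this]
    have hLA : L (e T) ∈ A := ⟨_, hyΔ, rfl⟩
    have h1 := hfa _ hLA
    have h2 := hfb c hcB
    have hLT : f (L (e T)) = -((1/2) * ∑ S ∈ T.powerset, g0 S) := by
      rw [hfx]
      have hLval : ∀ S : Finset α, L (e T) S =
          if S ⊆ T then (1:ℝ)/2 else 0 := by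
        intro S
        show (∑ T' ∈ Finset.univ.filter (fun T' : Finset α => S ⊆ T'), e T T' / 2) = _
        rcases Classical.em (S ⊆ T) with h | h
        · rw [Finset.sum_eq_single T]
          · simp [h, he]
          · intro T' _ hne; simp [he, hne.symm]
          · intro habs; simp [h] at habs
        · rw [Finset.sum_eq_zero, if_neg h]
          intro T' hT'
          simp only [Finset.mem_filter, Finset.mem_univ, true_and] at hT'
          have hne : T ≠ T' := fun hh => h (hh ▸ hT')
          simp [he, hne]
      have hps : Finset.univ.filter (fun S : Finset α => S ⊆ T) = T.powerset := by
        ext S; simp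
      have : ∑ S : Finset α, L (e T) S * g0 S
          = (1/2) * ∑ S ∈ T.powerset, g0 S := by
        calc ∑ S : Finset α, L (e T) S * g0 S
            = ∑ S : Finset α, (if S ⊆ T then (1:ℝ)/2 * g0 S else 0) := by
              apply Finset.sum_congr rfl
              intro S _
              rw [hLval S, ite_mul, zero_mul]
          _ = ∑ S ∈ Finset.univ.filter (fun S : Finset α => S ⊆ T), (1:ℝ)/2 * g0 S :=
              (Finset.sum_filter _ _).symm
          _ = (1/2) * ∑ S ∈ T.powerset, g0 S := by rw [hps, Finset.mul_sum]
      rw [this]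
    rw [hLT] at h1
    rw [hfc] at h2
    linarith
    -- normalize and contradict hqf
  set m : ℝ := (F.image (fun T => (1/2) * ∑ S ∈ T.powerset, g0 S)).min'
    (hFne.image _) with hm
  obtain ⟨T₀, hT₀F, hT₀⟩ := Finset.mem_image.1 ((F.image (fun T => (1/2) * ∑ S ∈ T.powerset, g0 S)).min'_mem (hFne.image _))
  have hmlt : ∑ S : Finset α, g0 S * q ^ S.card < m := by
    rw [hm, ← hT₀]
    exact hkey T₀ hT₀F
  have hsum_nn : 0 ≤ ∑ S : Finset α, g0 S * q ^ S.card :=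
    Finset.sum_nonneg fun S _ => mul_nonneg (hg0nn S) (pow_nonneg hq _)
  have hmpos : 0 < m := lt_of_le_of_lt hsum_nn hmlt
  set g' : Finset α → ℝ := fun S => g0 S / (2 * m) with hg'
  have hg'nn : ∀ S, 0 ≤ g' S := fun S => div_nonneg (hg0nn S) (by linarith)
  have hg'cov : ∀ T ∈ F, 1 ≤ ∑ S ∈ T.powerset, g' S := by
    intro T hT
    have hmle : m ≤ (1/2) * ∑ S ∈ T.powerset, g0 S :=
      Finset.min'_le _ _ (Finset.mem_image_of_mem _ hT)
    have : ∑ S ∈ T.powerset, g' S = (∑ S ∈ T.powerset, g0 S) / (2 * m) := by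
      rw [hg', Finset.sum_div]
    rw [this, le_div_iff₀ (by linarith)]
    linarith
  have hg'q : ∑ S : Finset α, g' S * q ^ S.card < 1 / 2 := by
    have : ∑ S : Finset α, g' S * q ^ S.card
        = (∑ S : Finset α, g0 S * q ^ S.card) / (2 * m) := by
      rw [Finset.sum_div]
      apply Finset.sum_congr rfl
      intro S _; rw [hg']; ring
    rw [this, div_lt_iff₀ (by linarith)]
    linarith
  -- continuity: find p > q with the sum still ≤ 1/2
  have hcont : Continuous (fun p : ℝ => ∑ S : Finset α, g' S * p ^ S.card) := by
    apply continuous_finset_sum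
    intro S _
    exact continuous_const.mul (continuous_pow _)
  have htend : Filter.Tendsto (fun p : ℝ => ∑ S : Finset α, g' S * p ^ S.card)
      (nhdsWithin q (Set.Ioi q)) (nhds (∑ S : Finset α, g' S * q ^ S.card)) :=
    (hcont.tendsto q).mono_left nhdsWithin_le_nhds
  have hev : ∀ᶠ p in nhdsWithin q (Set.Ioi q),
      (∑ S : Finset α, g' S * p ^ S.card) < 1 / 2 :=
    htend.eventually (Filter.Tendsto.eventually_lt_const hg'q Filter.tendsto_id)
  obtain ⟨p, hp1, hp2⟩ := (hev.and self_mem_nhdsWithin).exists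
  exact hqf p hp2 ⟨g', hg'nn, hg'cov, le_of_lt hp1⟩
end

section
/- Let H be an ℓ-bounded κ-spread hypergraph (multiset of subsets) on X. Replace each edge S ∈ H by M new edges, each equal to S together with ℓ−|S| brand-new vertices, each new vertex used in exactly one new edge. Then for all sufficiently large M the resulting ℓ-uniform hypergraph G is again κ-spread. -/
open Finset

open scoped Classical in
/-- Replacing each edge `S` of an `ℓ`-bounded `κ`-spread hypergraph `H` (edges indexed by `ι`)
by `M` new edges, each consisting of (the image of) `S` together with `ℓ - |S|` brand-new
vertices used in exactly one new edge, yields for all sufficiently large `M` an `ℓ`-uniform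
hypergraph `G` (indexed by `ι × Fin M`) which is again `κ`-spread. -/
theorem stmt6 {α β ι : Type*} [DecidableEq α] [DecidableEq β] [Fintype ι]
    (i : α ↪ β) (H : ι → Finset α) (ℓ : ℕ) (κ : ℝ) (hκ : 0 < κ)
    (hbdd : ∀ j, (H j).card ≤ ℓ)
    (hspread : ∀ S : Finset α,
      ((Finset.univ.filter (fun j : ι => S ⊆ H j)).card : ℝ) ≤ κ⁻¹ ^ S.card * Fintype.card ι) :
    ∃ M₀ : ℕ, ∀ M : ℕ, M₀ ≤ M → ∀ nu : ι × Fin M → Finset β,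
      (∀ e, (nu e).card = ℓ - (H e.1).card) →
      (∀ e, ∀ x ∈ nu e, x ∉ Set.range i) →
      (∀ e e', e ≠ e' → Disjoint (nu e) (nu e')) →
      (∀ e : ι × Fin M, ((H e.1).map i ∪ nu e).card = ℓ) ∧
      ∀ T : Finset β,
        ((Finset.univ.filter (fun e : ι × Fin M => T ⊆ (H e.1).map i ∪ nu e)).card : ℝ)
          ≤ κ⁻¹ ^ T.card * Fintype.card (ι × Fin M) := by
  have hκ1 : (1 : ℝ) ≤ max 1 κ := le_max_left _ _
  have hκ1' : 0 < max 1 κ := lt_of_lt_of_le one_pos hκ1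
  refine ⟨⌈(max 1 κ) ^ ℓ⌉₊, fun M hM nu hcard hnew hdisj => ?_⟩
  have hM1 : 1 ≤ M := le_trans (Nat.one_le_ceil_iff.2 (lt_of_lt_of_le one_pos
    (by calc (1:ℝ) = 1 ^ ℓ := (one_pow ℓ).symm
          _ ≤ (max 1 κ) ^ ℓ := pow_le_pow_left₀ zero_le_one hκ1 ℓ))) hM
  have hMreal : ((max 1 κ) : ℝ) ^ ℓ ≤ M := le_trans (Nat.le_ceil _) (by exact_mod_cast hM)
  -- disjointness of old and new parts
  have hdisj' : ∀ e : ι × Fin M, Disjoint ((H e.1).map i) (nu e) := by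
    intro e
    rw [Finset.disjoint_left]
    intro x hx hx'
    exact hnew e x hx' (by rcases Finset.mem_map.1 hx with ⟨a, _, rfl⟩; exact ⟨a, rfl⟩)
  have huniform : ∀ e : ι × Fin M, ((H e.1).map i ∪ nu e).card = ℓ := by
    intro e
    rw [Finset.card_union_of_disjoint (hdisj' e), Finset.card_map, hcard e,
      Nat.add_sub_cancel' (hbdd e.1)]
  refine ⟨huniform, fun T => ?_⟩
  have hcardprod : (Fintype.card (ι × Fin M) : ℝ) = (Fintype.card ι : ℝ) * M := by
    rw [Fintype.card_prod, Fintype.card_fin]; push_cast; ring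
  by_cases hT : ∀ x ∈ T, x ∈ Set.range i
  · -- all of T is old
    set S : Finset α := T.preimage i i.injective.injOn with hS
    have hST : S.map i = T := by
      rw [Finset.map_eq_image, hS, Finset.image_preimage]
      exact Finset.filter_true_of_mem hT
    have hScard : S.card = T.card := by rw [← hST, Finset.card_map]
    have hiff : ∀ e : ι × Fin M, (T ⊆ (H e.1).map i ∪ nu e) ↔ S ⊆ H e.1 := by
      intro e
      constructor
      · intro h a ha
        have : i a ∈ (H e.1).map i ∪ nu e := h (by rw [← hST]; exact Finset.mem_map_of_mem _ ha)
        rcases Finset.mem_union.1 this with h' | h'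
        · rcases Finset.mem_map.1 h' with ⟨b, hb, hba⟩
          rwa [← i.injective hba]
        · exact absurd ⟨a, rfl⟩ (hnew e _ h')
      · intro h x hx
        rw [← hST] at hx
        rcases Finset.mem_map.1 hx with ⟨a, ha, rfl⟩
        exact Finset.mem_union_left _ (Finset.mem_map_of_mem _ (h ha))
    have hfe : (Finset.univ.filter (fun e : ι × Fin M => T ⊆ (H e.1).map i ∪ nu e))
        = (Finset.univ.filter (fun j : ι => S ⊆ H j)) ×ˢ (Finset.univ : Finset (Fin M)) := by
      ext e
      simp [hiff e, Finset.mem_product]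
    rw [hfe, Finset.card_product, Finset.card_univ, Fintype.card_fin]
    push_cast
    rw [hcardprod, ← hScard, ← mul_assoc]
    exact mul_le_mul_of_nonneg_right (hspread S) (by positivity)
  · push_neg at hT
    obtain ⟨x, hxT, hxr⟩ := hT
    have hle1 : (Finset.univ.filter (fun e : ι × Fin M => T ⊆ (H e.1).map i ∪ nu e)).card ≤ 1 := by
      apply Finset.card_le_one.2
      intro e he e' he'
      have hxs : ∀ f : ι × Fin M, T ⊆ (H f.1).map i ∪ nu f → x ∈ nu f := by
        intro f hf
        rcases Finset.mem_union.1 (hf hxT) with h' | h'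
        · rcases Finset.mem_map.1 h' with ⟨a, _, rfl⟩; exact absurd ⟨a, rfl⟩ hxr
        · exact h'
      by_contra hne
      exact Finset.disjoint_left.1 (hdisj e e' hne)
        (hxs e (Finset.mem_filter.1 he).2) (hxs e' (Finset.mem_filter.1 he').2)
    rcases Finset.eq_empty_or_nonempty
        (Finset.univ.filter (fun e : ι × Fin M => T ⊆ (H e.1).map i ∪ nu e)) with h | h
    · rw [h]
      simp only [Finset.card_empty, Nat.cast_zero]
      positivity
    · obtain ⟨e, he⟩ := h
      have hTe : T ⊆ (H e.1).map i ∪ nu e := (Finset.mem_filter.1 he).2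
      have hTℓ : T.card ≤ ℓ := by
        rw [← huniform e]; exact Finset.card_le_card hTe
      have hι : 1 ≤ (Fintype.card ι : ℝ) := by
        have : Nonempty ι := ⟨e.1⟩
        exact_mod_cast Fintype.card_pos
      calc ((Finset.univ.filter (fun e : ι × Fin M => T ⊆ (H e.1).map i ∪ nu e)).card : ℝ)
          ≤ 1 := by exact_mod_cast hle1
        _ = ((max 1 κ)⁻¹ ^ ℓ * (max 1 κ) ^ ℓ) * 1 := by
            rw [← mul_pow, inv_mul_cancel₀ (ne_of_gt hκ1'), one_pow, one_mul]
        _ ≤ (κ⁻¹ ^ T.card * M) * (Fintype.card ι : ℝ) := by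
            refine mul_le_mul ?_ hι zero_le_one (by positivity)
            apply mul_le_mul _ hMreal (by positivity) (by positivity)
            calc ((max 1 κ)⁻¹ : ℝ) ^ ℓ ≤ (max 1 κ)⁻¹ ^ T.card :=
                  pow_le_pow_of_le_one (inv_nonneg.2 hκ1'.le) (inv_le_one_of_one_le₀ hκ1) hTℓ
              _ ≤ κ⁻¹ ^ T.card := by
                  apply pow_le_pow_left₀ (by positivity)
                  exact inv_anti₀ hκ (le_max_right _ _)
        _ = κ⁻¹ ^ T.card * Fintype.card (ι × Fin M) := by rw [hcardprod]; ring
end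

section
/- Let G be an r-uniform κ-spread hypergraph on Y (all edges of size exactly r). Then for an α-random subset Y_α of Y, the Janson quantity Λ := Σ_i Σ_j {E[1_{S_i⊆Y_α} 1_{S_j⊆Y_α}] : S_i ∩ S_j ≠ ∅} satisfies Λ ≤ μ² · Σ_{t=1}^{r} C(r,t)(ακ)^{−t}, where μ = |G| α^r. -/
/-!
Group the intersecting pairs `(H j, H k)` by their intersection `S`, of size `t ≥ 1`: such a pair
has `|H j ∪ H k| = 2r - t`. For fixed `j` there are `C(r, t)` choices of `S ⊆ H j`, and by
spreadness at most `κ⁻¹ ^ t |ι|` edges `H k` contain `S`; finally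
`α ^ (2r - t) = (α ^ r) ^ 2 α⁻¹ ^ t`.
-/

open Finset

section DoubleCounting

variable {Y ι : Type*} [DecidableEq Y] [Fintype ι]

lemma sum_inter_nonempty_le_sum_powersetCard (A : Finset Y) (H : ι → Finset Y) (f : ℕ → ℝ)
    (hf : ∀ t, 0 ≤ f t) :
    ∑ k, (if (A ∩ H k).Nonempty then f #(A ∩ H k) else 0)
      ≤ ∑ t ∈ Icc 1 #A, ∑ S ∈ A.powersetCard t, (#{k | S ⊆ H k} : ℝ) * f t := by
  set g : ι → ℕ → Finset Y → ℝ := fun k t S => if S ⊆ H k then f t else 0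
  have hg : ∀ k t S, 0 ≤ g k t S := fun k t S => by
    unfold g
    split_ifs
    exacts [hf t, le_rfl]
  have hcount : ∀ t S, (#{k | S ⊆ H k} : ℝ) * f t = ∑ k, g k t S := fun t S => by
    simp only [g, natCast_card_filter, sum_mul, ite_mul, one_mul, zero_mul]
  simp only [hcount]
  rw [sum_congr rfl fun t _ => sum_comm, sum_comm]
  refine sum_le_sum fun k _ => ?_
  split_ifs with hne
  · set t := #(A ∩ H k)
    have ht : t ∈ Icc 1 #A := mem_Icc.2 ⟨card_pos.2 hne, card_le_card inter_subset_left⟩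
    have hS : A ∩ H k ∈ A.powersetCard t := mem_powersetCard.2 ⟨inter_subset_left, rfl⟩
    calc f t = g k t (A ∩ H k) := by simp [g, inter_subset_right]
      _ ≤ ∑ S ∈ A.powersetCard t, g k t S := single_le_sum (fun S _ => hg k t S) hS
      _ ≤ _ := single_le_sum (f := fun t => ∑ S ∈ A.powersetCard t, g k t S)
          (fun t _ => sum_nonneg fun S _ => hg k t S) ht
  · exact sum_nonneg fun t _ => sum_nonneg fun S _ => hg k t S

lemma sum_inter_nonempty_le_of_spread {κ : ℝ} (A : Finset Y) (H : ι → Finset Y)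
    (hspread : ∀ S : Finset Y, (#{k | S ⊆ H k} : ℝ) ≤ κ⁻¹ ^ #S * Fintype.card ι)
    (f : ℕ → ℝ) (hf : ∀ t, 0 ≤ f t) :
    ∑ k, (if (A ∩ H k).Nonempty then f #(A ∩ H k) else 0)
      ≤ Fintype.card ι * ∑ t ∈ Icc 1 #A, ((#A).choose t : ℝ) * κ⁻¹ ^ t * f t := by
  refine (sum_inter_nonempty_le_sum_powersetCard A H f hf).trans ?_
  rw [mul_sum]
  refine sum_le_sum fun t _ => ?_
  calc ∑ S ∈ A.powersetCard t, (#{k | S ⊆ H k} : ℝ) * f t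
      ≤ ∑ S ∈ A.powersetCard t, κ⁻¹ ^ t * Fintype.card ι * f t :=
        sum_le_sum fun S hS => by
          simpa only [(mem_powersetCard.1 hS).2] using
            mul_le_mul_of_nonneg_right (hspread S) (hf t)
    _ = _ := by rw [sum_const, card_powersetCard, nsmul_eq_mul]; ring

end DoubleCounting

lemma pow_sub_eq_sq_pow_mul_inv_pow {G₀ : Type*} [CommGroupWithZero G₀] (a : G₀) {r t : ℕ}
    (ht : 1 ≤ t) (htr : t ≤ r) : a ^ (2 * r - t) = (a ^ r) ^ 2 * a⁻¹ ^ t := by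
  rw [pow_sub_of_lt a (by omega), inv_pow, ← pow_mul, mul_comm r]

lemma card_union_of_card_eq {Y : Type*} [DecidableEq Y] {A B : Finset Y} {r : ℕ}
    (hA : #A = r) (hB : #B = r) : #(A ∪ B) = 2 * r - #(A ∩ B) := by
  have := card_union_add_card_inter A B
  omega

theorem stmt8_general {Y ι : Type*} [DecidableEq Y] [Fintype ι]
    (H : ι → Finset Y) (r : ℕ) (κ : ℝ)
    (α : ℝ) (hα0 : 0 ≤ α)
    (huni : ∀ j, (H j).card = r)
    (hspread : ∀ S : Finset Y,
      ((Finset.univ.filter (fun j : ι => S ⊆ H j)).card : ℝ) ≤ κ⁻¹ ^ S.card * Fintype.card ι) :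
    (∑ j : ι, ∑ k : ι,
        if ((H j) ∩ (H k)).Nonempty then α ^ ((H j) ∪ (H k)).card else 0)
      ≤ ((Fintype.card ι : ℝ) * α ^ r) ^ 2
          * ∑ t ∈ Finset.Icc 1 r, (r.choose t : ℝ) * ((α * κ)⁻¹) ^ t := by
  calc _ = ∑ j : ι, ∑ k : ι,
        if ((H j) ∩ (H k)).Nonempty then α ^ (2 * r - #(H j ∩ H k)) else 0 := by
        simp only [card_union_of_card_eq (huni _) (huni _)]
    _ ≤ ∑ _j : ι, Fintype.card ι * ∑ t ∈ Icc 1 r, (r.choose t : ℝ) * κ⁻¹ ^ t * α ^ (2 * r - t) :=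
        sum_le_sum fun j _ => by
          simpa only [huni j] using sum_inter_nonempty_le_of_spread (H j) H hspread
            (fun t => α ^ (2 * r - t)) (fun t => pow_nonneg hα0 _)
    _ = _ := by
        simp only [sum_const, card_univ, nsmul_eq_mul, mul_sum]
        refine sum_congr rfl fun t ht => ?_
        obtain ⟨ht1, htr⟩ := mem_Icc.1 ht
        rw [pow_sub_eq_sq_pow_mul_inv_pow α ht1 htr, mul_inv, mul_pow]
        ring

/-- For an `r`-uniform `κ`-spread hypergraph with edges `H j` (`j : ι`) on `Y` and an
`α`-random subset `Y_α`, the Janson quantity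
`Λ = ∑_{i,j : H i ∩ H j ≠ ∅} P(H i ∪ H j ⊆ Y_α)` satisfies
`Λ ≤ μ² ∑_{t=1}^r C(r,t)(ακ)^{-t}` where `μ = |ι| α^r`. -/
theorem stmt8 {Y ι : Type*} [Fintype Y] [DecidableEq Y] [Fintype ι]
    (H : ι → Finset Y) (r : ℕ) (κ : ℝ) (hκ : 0 < κ)
    (α : ℝ) (hα0 : 0 ≤ α) (hα1 : α ≤ 1)
    (huni : ∀ j, (H j).card = r)
    (hspread : ∀ S : Finset Y,
      ((Finset.univ.filter (fun j : ι => S ⊆ H j)).card : ℝ) ≤ κ⁻¹ ^ S.card * Fintype.card ι) :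
    (∑ j : ι, ∑ k : ι,
        if ((H j) ∩ (H k)).Nonempty then α ^ ((H j) ∪ (H k)).card else 0)
      ≤ ((Fintype.card ι : ℝ) * α ^ r) ^ 2
          * ∑ t ∈ Finset.Icc 1 r, (r.choose t : ℝ) * ((α * κ)⁻¹) ^ t :=
  stmt8_general H r κ α hα0 huni hspread
end

section
/- Let ξ be a binomial random variable Bin(n, p) with E[ξ] = np an integer. Then P(ξ ≤ E[ξ]) ≥ 1/2. -/
/-! If `p ≤ 1/2`, differentiate the distribution function in `p`: the sum telescopes and
`P(ξ ≤ m) = 1 - n ∫₀ᵖ b`, where `b(x) = C(n-1, m) x^m (1-x)^(n-1-m)`. A log-derivative computation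
gives `b(p - s) ≤ b(p + s)` for `0 < s < p`, so `∫₀ᵖ b` is at most half of `∫₀¹ b ≤ 1/n`.
If `p ≥ 1/2`, comparing ratios of consecutive terms shows by induction on `j` that
`P(ξ = m + 1 + j) ≤ P(ξ = m - j)`, hence `P(ξ > m) ≤ P(ξ ≤ m)`. -/

open Finset Polynomial intervalIntegral

theorem mul_mul_sq_sub_sq_le {a b p q t : ℝ} (ha : 0 ≤ a) (ht : t < p) (hpq : p ≤ q)
    (hab : b * p ≤ a * q) (hp : 0 ≤ p ^ 2 - t ^ 2) :
    b * q * (p ^ 2 - t ^ 2) ≤ a * p * (q ^ 2 - t ^ 2) := by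
  have hp₀ : 0 < p := by nlinarith
  refine le_of_mul_le_mul_left ?_ hp₀
  calc p * (b * q * (p ^ 2 - t ^ 2)) = b * p * q * (p ^ 2 - t ^ 2) := by ring
    _ ≤ a * q * q * (p ^ 2 - t ^ 2) := by gcongr; linarith
    _ ≤ p * (a * p * (q ^ 2 - t ^ 2)) := by
      nlinarith [mul_nonneg ha (mul_nonneg (sq_nonneg t) (by nlinarith : 0 ≤ q ^ 2 - p ^ 2))]

theorem sub_pow_mul_add_pow_le {p q s : ℝ} {a b : ℕ} (hs : 0 ≤ s) (hsp : s < p) (hpq : p ≤ q)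
    (hab : b * p ≤ a * q) : (p - s) ^ a * (q + s) ^ b ≤ (p + s) ^ a * (q - s) ^ b := by
  set ψ : ℝ → ℝ := fun t ↦
    a * Real.log (p + t) - a * Real.log (p - t) + b * Real.log (q - t) - b * Real.log (q + t)
  set ψ' : ℝ → ℝ := fun t ↦ a / (p + t) + a / (p - t) - b / (q - t) - b / (q + t)
  have hψ : ∀ t ∈ Set.Icc 0 s, HasDerivAt ψ (ψ' t) t := by
    intro t ⟨ht₀, hts⟩
    have d₁ := ((hasDerivAt_id t).const_add p).log (by simp only [id]; linarith)
    have d₂ := ((hasDerivAt_id t).const_sub p).log (by simp only [id]; linarith)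
    have d₃ := ((hasDerivAt_id t).const_sub q).log (by simp only [id]; linarith)
    have d₄ := ((hasDerivAt_id t).const_add q).log (by simp only [id]; linarith)
    refine ((((d₁.const_mul (a : ℝ)).sub (d₂.const_mul (a : ℝ))).add
      (d₃.const_mul (b : ℝ))).sub (d₄.const_mul (b : ℝ))).congr_deriv ?_
    simp only [ψ', id]
    ring
  have hψ'_nonneg : ∀ t ∈ Set.Ioo 0 s, 0 ≤ ψ' t := by
    intro t ⟨ht₀, hts⟩
    have hp : 0 < p ^ 2 - t ^ 2 := by nlinarith
    have hq : 0 < q ^ 2 - t ^ 2 := by nlinarith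
    have : p + t ≠ 0 := by linarith
    have : p - t ≠ 0 := by linarith
    have : q + t ≠ 0 := by linarith
    have : q - t ≠ 0 := by linarith
    have e : ψ' t = 2 * (a * p * (q ^ 2 - t ^ 2) - b * q * (p ^ 2 - t ^ 2)) /
        ((p ^ 2 - t ^ 2) * (q ^ 2 - t ^ 2)) := by
      simp only [ψ']
      field_simp
      ring
    rw [e]
    have := mul_mul_sq_sub_sq_le (Nat.cast_nonneg a) (by linarith) hpq hab hp.le
    positivity
  have hmono : MonotoneOn ψ (Set.Icc 0 s) := by
    refine monotoneOn_of_deriv_nonneg (convex_Icc 0 s)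
      (fun t ht ↦ (hψ t ht).continuousAt.continuousWithinAt) (fun t ht ↦ ?_) (fun t ht ↦ ?_)
    all_goals rw [interior_Icc] at ht
    · exact (hψ t (Set.Ioo_subset_Icc_self ht)).differentiableAt.differentiableWithinAt
    · rw [(hψ t (Set.Ioo_subset_Icc_self ht)).deriv]; exact hψ'_nonneg t ht
  have hψs : ψ 0 ≤ ψ s := hmono (Set.left_mem_Icc.2 hs) (Set.right_mem_Icc.2 hs) hs
  have h₁ : 0 < p - s := by linarith
  have h₂ : 0 < q - s := by linarith
  have h₃ : 0 < p + s := by linarith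
  have h₄ : 0 < q + s := by linarith
  rw [← Real.log_le_log_iff (by positivity) (by positivity),
    Real.log_mul (by positivity) (by positivity), Real.log_mul (by positivity) (by positivity),
    Real.log_pow, Real.log_pow, Real.log_pow, Real.log_pow]
  simp only [ψ, add_zero, sub_zero, sub_self] at hψs
  linarith

theorem sq_sub_sq_mul_sq_le {B m p q : ℝ} (t : ℝ) (hbal : B * p = m * q) (hq : 0 ≤ q)
    (hqp : q ≤ p) (hm : 0 ≤ m) : (B ^ 2 - t ^ 2) * p ^ 2 ≤ ((m + 1) ^ 2 - t ^ 2) * q ^ 2 := by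
  have hsq : q ^ 2 ≤ p ^ 2 := pow_le_pow_left₀ hq hqp 2
  have hbal_sq : (B * p) ^ 2 = (m * q) ^ 2 := by rw [hbal]
  nlinarith [mul_le_mul_of_nonneg_left hsq (sq_nonneg t), sq_nonneg q]

theorem two_mul_integral_le_of_reflect {g : ℝ → ℝ} {p : ℝ} (hg : Continuous g) (hp : 0 ≤ p)
    (hp₂ : 2 * p ≤ 1) (hg_nonneg : ∀ x ∈ Set.Icc (2 * p) 1, 0 ≤ g x)
    (hreflect : ∀ s ∈ Set.Ioo 0 p, g (p - s) ≤ g (p + s)) :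
    2 * ∫ x in 0..p, g x ≤ ∫ x in 0..1, g x := by
  have hleft : ∫ x in 0..p, g x = ∫ s in 0..p, g (p - s) := by
    simp [integral_comp_sub_left]
  have hright : ∫ s in 0..p, g (p + s) = ∫ x in p..2 * p, g x := by
    simp [integral_comp_add_left, two_mul]
  have hmono : ∫ s in 0..p, g (p - s) ≤ ∫ s in 0..p, g (p + s) :=
    integral_mono_on_of_le_Ioo hp ((hg.comp (continuous_sub_left p)).intervalIntegrable 0 p)
      ((hg.comp (continuous_const_add p)).intervalIntegrable 0 p) hreflect
  have htail : 0 ≤ ∫ x in 2 * p..1, g x := integral_nonneg hp₂ hg_nonneg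
  rw [← integral_add_adjacent_intervals (hg.intervalIntegrable 0 p) (hg.intervalIntegrable p 1),
    ← integral_add_adjacent_intervals (hg.intervalIntegrable p (2 * p))
      (hg.intervalIntegrable _ 1)]
  linarith

namespace bernsteinPolynomial

theorem eval_eq {R : Type*} [CommRing R] (n k : ℕ) (x : R) :
    (bernsteinPolynomial R n k).eval x = n.choose k * x ^ k * (1 - x) ^ (n - k) := by
  simp [bernsteinPolynomial]

theorem derivative_sum_range {R : Type*} [CommRing R] (n m : ℕ) :
    derivative (∑ k ∈ range (m + 1), bernsteinPolynomial R n k) =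
      -n * bernsteinPolynomial R (n - 1) m := by
  induction m with
  | zero => simp [derivative_zero]
  | succ m ih => rw [sum_range_succ, derivative_add, ih, derivative_succ]; ring

theorem eval_sum_range_eq_one_sub_integral (n m : ℕ) (x : ℝ) :
    (∑ k ∈ range (m + 1), bernsteinPolynomial ℝ n k).eval x =
      1 - n * ∫ t in (0 : ℝ)..x, (bernsteinPolynomial ℝ (n - 1) m).eval t := by
  have hftc := integral_eq_sub_of_hasDerivAt
    (fun t _ ↦ (∑ k ∈ range (m + 1), bernsteinPolynomial ℝ n k).hasDerivAt t)
    ((Polynomial.continuous _).intervalIntegrable 0 x)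
  have heval₀ : (∑ k ∈ range (m + 1), bernsteinPolynomial ℝ n k).eval 0 = 1 := by
    simp [eval_finsetSum, eval_at_0]
  rw [derivative_sum_range, heval₀] at hftc
  simp only [eval_mul, eval_neg, eval_natCast, neg_mul, integral_neg, integral_const_mul] at hftc
  linarith

theorem eval_succ_mul (n k : ℕ) (x : ℝ) :
    (bernsteinPolynomial ℝ n (k + 1)).eval x * ((k + 1) * (1 - x)) =
      (bernsteinPolynomial ℝ n k).eval x * ((n - k : ℕ) * x) := by
  rcases lt_or_ge k n with hkn | hnk
  · have hchoose : (n.choose (k + 1) : ℝ) * (k + 1) = n.choose k * (n - k : ℕ) := by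
      exact_mod_cast Nat.choose_succ_right_eq n k
    have hpow : (1 - x) ^ (n - k) = (1 - x) ^ (n - (k + 1)) * (1 - x) := by
      rw [← pow_succ]; congr 1; omega
    rw [eval_eq, eval_eq, hpow]
    linear_combination x ^ (k + 1) * (1 - x) ^ (n - (k + 1)) * (1 - x) * hchoose
  · simp [eval_eq, Nat.choose_eq_zero_of_lt (Nat.lt_succ_of_le hnk), Nat.sub_eq_zero_of_le hnk]

theorem eval_nonneg {n k : ℕ} {x : ℝ} (h₀ : 0 ≤ x) (h₁ : x ≤ 1) :
    0 ≤ (bernsteinPolynomial ℝ n k).eval x := by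
  rw [eval_eq]
  have : 0 ≤ 1 - x := by linarith
  positivity

theorem eval_sub_le_eval_add {n k : ℕ} {p s : ℝ} (hs : 0 ≤ s) (hsp : s < p)
    (hp : 2 * p ≤ 1) (hk : (n - k : ℕ) * p ≤ k * (1 - p)) :
    (bernsteinPolynomial ℝ n k).eval (p - s) ≤ (bernsteinPolynomial ℝ n k).eval (p + s) := by
  have h := sub_pow_mul_add_pow_le hs hsp (show p ≤ 1 - p by linarith) hk
  rw [eval_eq, eval_eq, show 1 - (p - s) = 1 - p + s by ring,
    show 1 - (p + s) = 1 - p - s by ring, mul_assoc, mul_assoc]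
  exact mul_le_mul_of_nonneg_left h (Nat.cast_nonneg _)

theorem eval_succ_le_eval {n m : ℕ} {p : ℝ} (hp : 1 ≤ 2 * p) (hm : (m : ℝ) = n * p) (hmn : m < n) :
    (bernsteinPolynomial ℝ n (m + 1)).eval p ≤ (bernsteinPolynomial ℝ n m).eval p := by
  have hq : 0 < 1 - p := by
    have : (m : ℝ) < n := by exact_mod_cast hmn
    nlinarith
  have h := eval_succ_mul n m p
  rw [Nat.cast_sub hmn.le, show ((n : ℝ) - m) * p = m * (1 - p) by linear_combination -hm,
    ← mul_assoc, ← mul_assoc] at h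
  have h' := mul_right_cancel₀ hq.ne' h
  nlinarith [eval_nonneg (n := n) (k := m) (by linarith) (by linarith : p ≤ 1)]

theorem eval_add_succ_le_eval_sub_succ {n m j : ℕ} {p : ℝ} (hp : 1 ≤ 2 * p)
    (hm : (m : ℝ) = n * p) (hj : m + (j + 1) < n)
    (ih : (bernsteinPolynomial ℝ n (m + 1 + j)).eval p ≤ (bernsteinPolynomial ℝ n (m - j)).eval p) :
    (bernsteinPolynomial ℝ n (m + 1 + j + 1)).eval p ≤
      (bernsteinPolynomial ℝ n (m - (j + 1))).eval p := by
  have h2m : n ≤ 2 * m := by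
    exact_mod_cast (show (n : ℝ) ≤ 2 * m by nlinarith [n.cast_nonneg (α := ℝ)])
  have hq : 0 < 1 - p := by
    have : (m : ℝ) < n := by exact_mod_cast (by omega : m < n)
    nlinarith
  have r₁ := eval_succ_mul n (m + 1 + j) p
  have r₂ := eval_succ_mul n (m - (j + 1)) p
  rw [show m - (j + 1) + 1 = m - j by omega] at r₂
  rw [Nat.cast_sub (show m + 1 + j ≤ n by omega)] at r₁
  rw [Nat.cast_sub (show m - (j + 1) ≤ n by omega), Nat.cast_sub (show j + 1 ≤ m by omega)] at r₂
  push_cast at r₁ r₂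
  set t : ℝ := j + 1
  have hkey := sq_sub_sq_mul_sq_le t (show ((n : ℝ) - m) * p = m * (1 - p) by
    linear_combination -hm) hq.le (by linarith) m.cast_nonneg
  have htm : 0 < (m : ℝ) + 1 - t := by
    have : (j : ℝ) + 1 ≤ m := by exact_mod_cast (show j + 1 ≤ m by omega)
    linarith
  have htn : 0 ≤ (n : ℝ) - m - t := by
    have : (m : ℝ) + j + 1 ≤ n := by exact_mod_cast (show m + j + 1 ≤ n by omega)
    linarith
  have hp₀ : 0 ≤ p := by linarith
  refine le_of_mul_le_mul_right ?_ (by positivity : 0 < (m + 1 + t) * (m + 1 - t) * (1 - p) ^ 2)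
  calc _ = (bernsteinPolynomial ℝ n (m + 1 + j)).eval p * ((n - m - t) * p) *
        ((m + 1 - t) * (1 - p)) := by
        linear_combination ((m + 1 - t) * (1 - p)) * r₁
    _ ≤ (bernsteinPolynomial ℝ n (m - j)).eval p * ((n - m - t) * p) * ((m + 1 - t) * (1 - p)) := by
        gcongr
    _ = (bernsteinPolynomial ℝ n (m - (j + 1))).eval p * (((n - m) ^ 2 - t ^ 2) * p ^ 2) := by
        linear_combination ((n - m - t) * p) * r₂
    _ ≤ (bernsteinPolynomial ℝ n (m - (j + 1))).eval p * (((m + 1) ^ 2 - t ^ 2) * (1 - p) ^ 2) :=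
        mul_le_mul_of_nonneg_left hkey (eval_nonneg hp₀ (by linarith))
    _ = _ := by ring

theorem eval_add_le_eval_sub {n m : ℕ} {p : ℝ} (hp : 1 ≤ 2 * p) (hm : (m : ℝ) = n * p) {j : ℕ}
    (hj : m + j < n) :
    (bernsteinPolynomial ℝ n (m + 1 + j)).eval p ≤ (bernsteinPolynomial ℝ n (m - j)).eval p := by
  induction j with
  | zero => exact eval_succ_le_eval hp hm hj
  | succ j ih => exact eval_add_succ_le_eval_sub_succ hp hm hj (ih (by omega))

end bernsteinPolynomial

theorem half_le_sum_eval_of_two_mul_le {n m : ℕ} {p : ℝ} (hp₀ : 0 ≤ p) (hp : 2 * p ≤ 1)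
    (hm : (m : ℝ) = n * p) :
    1 / 2 ≤ (∑ k ∈ range (m + 1), bernsteinPolynomial ℝ n k).eval p := by
  set g : ℝ → ℝ := fun x ↦ (bernsteinPolynomial ℝ (n - 1) m).eval x
  have hmn : m ≤ n := by
    exact_mod_cast (show (m : ℝ) ≤ n by rw [hm]; nlinarith [n.cast_nonneg (α := ℝ)])
  have hreflect : ∀ s ∈ Set.Ioo 0 p, g (p - s) ≤ g (p + s) := fun s hs ↦
    bernsteinPolynomial.eval_sub_le_eval_add hs.1.le hs.2 hp (by
      have : ((n - 1 - m : ℕ) : ℝ) ≤ n - m :=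
        (Nat.cast_le.2 (by omega)).trans (Nat.cast_sub hmn).le
      nlinarith)
  have hhalf := two_mul_integral_le_of_reflect (Polynomial.continuous _) hp₀ hp
    (fun x hx ↦ bernsteinPolynomial.eval_nonneg (by linarith [hx.1]) hx.2) hreflect
  have hone : 0 ≤ (∑ k ∈ range (m + 1), bernsteinPolynomial ℝ n k).eval 1 := by
    rw [eval_finsetSum]
    exact sum_nonneg fun k _ ↦ bernsteinPolynomial.eval_nonneg zero_le_one le_rfl
  rw [bernsteinPolynomial.eval_sum_range_eq_one_sub_integral] at hone ⊢
  have : (0 : ℝ) ≤ n := n.cast_nonneg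
  nlinarith

theorem half_le_sum_eval_of_one_le_two_mul {n m : ℕ} {p : ℝ} (hp : 1 ≤ 2 * p) (hp₁ : p ≤ 1)
    (hm : (m : ℝ) = n * p) :
    1 / 2 ≤ (∑ k ∈ range (m + 1), bernsteinPolynomial ℝ n k).eval p := by
  have hmn : m ≤ n := by
    exact_mod_cast (show (m : ℝ) ≤ n by rw [hm]; nlinarith [n.cast_nonneg (α := ℝ)])
  have h2m : n ≤ 2 * m := by
    exact_mod_cast (show (n : ℝ) ≤ 2 * m by nlinarith [n.cast_nonneg (α := ℝ)])
  set b : ℕ → ℝ := fun k ↦ (bernsteinPolynomial ℝ n k).eval p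
  have htotal : ∑ k ∈ range (m + 1), b k + ∑ j ∈ range (n - m), b (m + 1 + j) = 1 := by
    rw [← sum_range_add, show m + 1 + (n - m) = n + 1 by omega]
    simpa [b, eval_finsetSum] using congrArg (eval p) (bernsteinPolynomial.sum ℝ n)
  have htail : ∑ j ∈ range (n - m), b (m + 1 + j) ≤ ∑ k ∈ range (m + 1), b k :=
    calc ∑ j ∈ range (n - m), b (m + 1 + j)
        ≤ ∑ j ∈ range (n - m), b (m - j) := sum_le_sum fun j hj ↦
          bernsteinPolynomial.eval_add_le_eval_sub hp hm (by rw [mem_range] at hj; omega)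
      _ ≤ ∑ j ∈ range (m + 1), b (m - j) := sum_le_sum_of_subset_of_nonneg
          (range_subset_range.2 (by omega)) fun k _ _ ↦
            bernsteinPolynomial.eval_nonneg (by linarith) hp₁
      _ = ∑ k ∈ range (m + 1), b k := sum_range_reflect b (m + 1)
  rw [eval_finsetSum]
  linarith

/-- A binomial random variable `Bin(n,p)` whose mean `np` is an integer `m` satisfies
`P(ξ ≤ m) ≥ 1/2`. -/
theorem stmt10 (n m : ℕ) (p : ℝ) (hp0 : 0 ≤ p) (hp1 : p ≤ 1) (hm : (m : ℝ) = n * p) :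
    (1 : ℝ) / 2 ≤ ∑ k ∈ Finset.range (m + 1),
      (n.choose k : ℝ) * p ^ k * (1 - p) ^ (n - k) := by
  simp only [← bernsteinPolynomial.eval_eq, ← eval_finsetSum]
  rcases le_total (2 * p) 1 with hp | hp
  · exact half_le_sum_eval_of_two_mul_le hp0 hp hm
  · exact half_le_sum_eval_of_one_le_two_mul hp hp1 hm
end

section
/- For integers n, s, and 0 ≤ np with np + s ≤ n + s, one has Σ_{i=0}^{s} C(n, np+i) ≤ C(n+s, np+s), and consequently Σ_{i=0}^{s} C(n, np+i) ≤ C(n, np) · p^{−s} when p = m/n for an integer m (i.e., C(n+s, m+s) ≤ C(n,m)·(n/m)^s). -/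
open Finset

lemma aux_sum (n s m : ℕ) :
    (∑ i ∈ Finset.range (s + 1), n.choose (m + i)) ≤ (n + s).choose (m + s) := by
  induction s with
  | zero => simp
  | succ s ih =>
      rw [Finset.sum_range_succ]
      have h1 : n.choose (m + (s + 1)) ≤ (n + s).choose (m + (s + 1)) :=
        Nat.choose_le_choose _ (by omega)
      have h2 : (n + (s+1)).choose (m + (s+1))
          = (n + s).choose (m + s) + (n + s).choose (m + s + 1) := by
        show (n + s + 1).choose (m + s + 1) = _
        rw [Nat.choose_succ_succ']
      have h3 : n.choose (m + (s + 1)) = n.choose (m + s + 1) := by ring_nf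
      have h4 : (n + s).choose (m + (s + 1)) = (n + s).choose (m + s + 1) := by ring_nf
      omega

lemma aux_ratio (n s m : ℕ) (hm1 : 1 ≤ m) (hmn : m ≤ n) :
    (((n + s).choose (m + s) : ℝ) ≤ (n.choose m : ℝ) * ((n : ℝ) / m) ^ s) := by
  induction s with
  | zero => simp
  | succ s ih =>
      have key : ((m : ℝ) + s + 1) * ((n + s + 1).choose (m + s + 1) : ℝ)
          = ((n : ℝ) + s + 1) * ((n + s).choose (m + s) : ℝ) := by
        have := Nat.add_one_mul_choose_eq (n + s) (m + s)
        have : ((n + s + 1) * (n + s).choose (m + s) : ℕ)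
            = (m + s + 1) * (n + s + 1).choose (m + s + 1) := by
          simpa [Nat.succ_eq_add_one, mul_comm] using this
        have := congrArg (fun x : ℕ => (x : ℝ)) this
        push_cast at this
        linarith
      have hms : (0:ℝ) < (m:ℝ) + s + 1 := by positivity
      have hm0 : (0:ℝ) < (m:ℝ) := by exact_mod_cast hm1
      have hstep : ((n + s + 1).choose (m + s + 1) : ℝ)
          ≤ ((n + s).choose (m + s) : ℝ) * ((n : ℝ) / m) := by
        have hcn : (0:ℝ) ≤ ((n + s).choose (m + s) : ℝ) := by positivity
        have hfrac : ((n:ℝ) + s + 1) / ((m:ℝ) + s + 1) ≤ (n:ℝ) / m := by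
          rw [div_le_div_iff₀ hms hm0]
          have : (m:ℝ) ≤ n := by exact_mod_cast hmn
          nlinarith [(Nat.cast_nonneg s : (0:ℝ) ≤ s)]
        have heq : ((n + s + 1).choose (m + s + 1) : ℝ)
            = ((n + s).choose (m + s) : ℝ) * (((n:ℝ) + s + 1) / ((m:ℝ) + s + 1)) := by
          field_simp
          linarith [key]
        calc ((n + s + 1).choose (m + s + 1) : ℝ)
            = ((n + s).choose (m + s) : ℝ) * (((n:ℝ) + s + 1) / ((m:ℝ) + s + 1)) := heq
          _ ≤ ((n + s).choose (m + s) : ℝ) * ((n:ℝ) / m) := by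
              exact mul_le_mul_of_nonneg_left hfrac hcn
      have : ((n + (s+1)).choose (m + (s+1)) : ℝ) = ((n + s + 1).choose (m + s + 1) : ℝ) := by
        norm_num [Nat.add_assoc]
      rw [this, pow_succ, ← mul_assoc]
      calc ((n + s + 1).choose (m + s + 1) : ℝ)
          ≤ ((n + s).choose (m + s) : ℝ) * ((n : ℝ) / m) := hstep
        _ ≤ (n.choose m : ℝ) * ((n : ℝ) / m) ^ s * ((n : ℝ) / m) := by
            apply mul_le_mul_of_nonneg_right ih
            positivity

/-- `∑_{i=0}^s C(n, m+i) ≤ C(n+s, m+s)`, and for `1 ≤ m ≤ n` (i.e. `p = m/n`),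
`C(n+s, m+s) ≤ C(n,m)·(n/m)^s`, hence `∑_{i=0}^s C(n, m+i) ≤ C(n,m)·p^{-s}`. -/
theorem stmt11 (n s m : ℕ) (hm1 : 1 ≤ m) (hmn : m ≤ n) :
    ((∑ i ∈ Finset.range (s + 1), n.choose (m + i)) ≤ (n + s).choose (m + s)) ∧
    (((n + s).choose (m + s) : ℝ) ≤ (n.choose m : ℝ) * ((n : ℝ) / m) ^ s) ∧
    ((∑ i ∈ Finset.range (s + 1), (n.choose (m + i) : ℝ))
        ≤ (n.choose m : ℝ) * ((n : ℝ) / m) ^ s) := by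
  have h1 := aux_sum n s m
  have h2 := aux_ratio n s m hm1 hmn
  refine ⟨h1, h2, ?_⟩
  calc (∑ i ∈ Finset.range (s + 1), (n.choose (m + i) : ℝ))
      = ((∑ i ∈ Finset.range (s + 1), n.choose (m + i) : ℕ) : ℝ) := by push_cast; ring
    _ ≤ (((n + s).choose (m + s) : ℕ) : ℝ) := by exact_mod_cast h1
    _ ≤ (n.choose m : ℝ) * ((n : ℝ) / m) ^ s := h2
end

section
/- Let S be a hypergraph (set of edges) on vertex set W with |W| = w, |S| = s edges, and let f be the size of a spanning forest of S (maximum forest contained in S). Let H_0 be a graph on vertex set V = [n] with maximum degree at most d, such that S is isomorphic to a subgraph of H_0. Let σ be a uniformly random permutation of V (with W ⊆ V). Then P(σ(S) ⊆ H_0) < (e² d / n)^f. -/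
/-!
Fix a maximum forest `F ⊆ S`: it has `f` edges spanning a vertex set `W` with `|W| ≤ 2f`.
Peeling off leaves one at a time, at most `d^f n^(n-f)` maps `V → V` send every edge of `F` onto
an edge of `H₀`, since the free end of a leaf must go to one of at most `d` neighbours of the image
of its other end rather than to any of the `n` vertices. A permutation sending `F` into `H₀`
agrees on `W` with `n^(n-|W|)` such maps, and each map agrees on `W` with at most `(n-|W|)!`
permutations, so the probability is at most `d^f (n-|W|)! n^|W| / (n^f n!)`. Finally
`(n-w)! n^w ≤ (w^w / w!) n! < e^w n! ≤ e^(2f) n!` by Stirling's bound `w^w < e^w w!`.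
-/

open Finset

/-- A graph (set of `2`-element edges) `F` is a forest iff every nonempty subfamily of
edges spans strictly more vertices than it has edges. -/
def IsForestEdges {V : Type*} [DecidableEq V] (F : Finset (Finset V)) : Prop :=
  ∀ F' ⊆ F, F'.Nonempty → F'.card + 1 ≤ (F'.biUnion id).card

namespace IsForestEdges

variable {V : Type*} [DecidableEq V] {F G : Finset (Finset V)}

lemma mono (hG : IsForestEdges G) (h : F ⊆ G) : IsForestEdges F :=
  fun F' hF' hne => hG F' (hF'.trans h) hne

lemma empty : IsForestEdges (∅ : Finset (Finset V)) :=
  fun _ hF' hne => absurd (subset_empty.1 hF') hne.ne_empty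

lemma singleton {e : Finset V} (he : #e = 2) : IsForestEdges {e} := by
  intro F' hF' hne
  obtain rfl := (subset_singleton_iff.1 hF').resolve_left hne.ne_empty
  simp [he]

lemma exists_leaf (h2 : ∀ e ∈ F, #e = 2) (hF : IsForestEdges F) (hne : F.Nonempty) :
    ∃ a b, a ≠ b ∧ {a, b} ∈ F ∧ ∀ e ∈ F, b ∈ e → e = {a, b} := by
  by_contra! hcon
  -- Otherwise every vertex lies on two edges, and counting incidences gives `2|V(F)| ≤ 2|F|`.
  have hdeg : ∀ v ∈ F.biUnion id, 2 ≤ #(F.bipartiteAbove (· ∈ ·) v) := by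
    intro v hv
    obtain ⟨e, he, hve⟩ := mem_biUnion.1 hv
    obtain ⟨x, y, hxy, rfl⟩ := card_eq_two.1 (h2 e he)
    obtain ⟨a, hav, hae⟩ : ∃ a, a ≠ v ∧ {a, v} ∈ F := by
      rcases mem_insert.1 hve with rfl | hv
      · exact ⟨y, hxy.symm, pair_comm v y ▸ he⟩
      · obtain rfl := mem_singleton.1 hv
        exact ⟨x, hxy, he⟩
    obtain ⟨e', he', hve', hne'⟩ := hcon a v hav hae
    exact one_lt_card.2 ⟨e', mem_filter.2 ⟨he', hve'⟩, _, mem_filter.2 ⟨hae, by simp⟩, hne'⟩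
  have hcount := card_mul_le_card_mul (· ∈ ·) hdeg fun e he =>
    (card_le_card fun _ h => (mem_filter.1 h).2).trans (h2 e he).le
  have := hF F le_rfl hne
  omega

end IsForestEdges

lemma card_biUnion_le_two_mul {V : Type*} [DecidableEq V] {F : Finset (Finset V)}
    (h2 : ∀ e ∈ F, #e = 2) : #(F.biUnion id) ≤ 2 * #F :=
  card_biUnion_le.trans <| by
    simp only [id, sum_congr rfl h2, sum_const, smul_eq_mul, mul_comm, le_rfl]

open scoped Classical in
lemma exists_forest_card_eq_sup {V : Type*} [DecidableEq V] (S : Finset (Finset V)) :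
    ∃ F ⊆ S, IsForestEdges F ∧ #F = (S.powerset.filter IsForestEdges).sup card := by
  obtain ⟨F, hF, hsup⟩ := exists_mem_eq_sup (S.powerset.filter IsForestEdges)
    ⟨∅, mem_filter.2 ⟨empty_mem_powerset S, IsForestEdges.empty⟩⟩ card
  rw [mem_filter, mem_powerset] at hF
  exact ⟨F, hF.1, hF.2, hsup.symm⟩

section

open scoped Nat
open Equiv

variable {V : Type*} [Fintype V] [DecidableEq V] {F H : Finset (Finset V)} {d : ℕ}

def edgeHoms (F H : Finset (Finset V)) : Finset (V → V) :=
  {g | ∀ e ∈ F, e.image g ∈ H}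

lemma mem_edgeHoms {g : V → V} : g ∈ edgeHoms F H ↔ ∀ e ∈ F, e.image g ∈ H := by
  simp [edgeHoms]

lemma update_mem_edgeHoms {g : V → V} (hg : g ∈ edgeHoms F H) {b : V} (hb : ∀ e ∈ F, b ∉ e)
    (v : V) : Function.update g b v ∈ edgeHoms F H := by
  refine mem_edgeHoms.2 fun e he => ?_
  rw [image_congr fun x hx => Function.update_of_ne (ne_of_mem_of_not_mem hx (hb e he)) v g]
  exact mem_edgeHoms.1 hg e he

lemma card_edgeHoms_mul_card_le (hH : ∀ e ∈ H, #e = 2) (hdeg : ∀ v, #{e ∈ H | v ∈ e} ≤ d)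
    {a b : V} (hab : a ≠ b) (hF : {a, b} ∈ F) (hleaf : ∀ e ∈ F, b ∈ e → e = {a, b}) :
    #(edgeHoms F H) * Fintype.card V ≤ #(edgeHoms (F.erase {a, b}) H) * d := by
  have hb : ∀ e ∈ F.erase {a, b}, b ∉ e := fun e he hbe =>
    ne_of_mem_erase he (hleaf e (mem_of_mem_erase he) hbe)
  refine card_mul_le_card_mul (fun g g' => ∀ x ≠ b, g x = g' x) (fun g hg => ?_) fun g' _ => ?_
  · have hg' : g ∈ edgeHoms (F.erase {a, b}) H :=
      mem_edgeHoms.2 fun e he => mem_edgeHoms.1 hg e (mem_of_mem_erase he)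
    calc Fintype.card V = #(univ.image (Function.update g b)) :=
          (card_image_of_injective _ (Function.update_injective g b)).symm
      _ ≤ _ := card_le_card fun g' h => by
          obtain ⟨v, -, rfl⟩ := mem_image.1 h
          exact mem_filter.2 ⟨update_mem_edgeHoms hg' hb v,
            fun x hx => (Function.update_of_ne hx v g).symm⟩
  · calc _ ≤ #{e ∈ H | g' a ∈ e} := card_le_card_of_injOn (fun g => image g {a, b}) ?_ ?_
      _ ≤ d := hdeg _
    · intro g hg
      rw [mem_coe, mem_bipartiteBelow, mem_edgeHoms] at hg
      refine mem_filter.2 ⟨hg.1 _ hF, ?_⟩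
      rw [← hg.2 a hab]
      exact mem_image_of_mem g (by simp)
    · intro g₁ hg₁ g₂ hg₂ heq
      rw [mem_coe, mem_bipartiteBelow, mem_edgeHoms] at hg₁ hg₂
      have hne : g₁ b ≠ g' a := by
        intro h
        have := hH _ (hg₁.1 _ hF)
        simp [image_insert, ← hg₁.2 a hab, h] at this
      have hb₁ : g₁ b ∈ image g₂ {a, b} := by
        rw [← show image g₁ {a, b} = image g₂ {a, b} from heq]
        exact mem_image_of_mem g₁ (by simp)
      simp only [image_insert, image_singleton, mem_insert, mem_singleton, hg₂.2 a hab,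
        hne, false_or] at hb₁
      funext x
      by_cases hx : x = b
      · rw [hx, hb₁]
      · rw [hg₁.2 x hx, hg₂.2 x hx]

lemma card_edgeHoms_mul_pow_le (hH : ∀ e ∈ H, #e = 2) (hdeg : ∀ v, #{e ∈ H | v ∈ e} ≤ d)
    (hF2 : ∀ e ∈ F, #e = 2) (hF : IsForestEdges F) :
    #(edgeHoms F H) * Fintype.card V ^ #F ≤ d ^ #F * Fintype.card V ^ Fintype.card V := by
  induction F using Finset.strongInduction with
  | H F ih =>
  rcases F.eq_empty_or_nonempty with rfl | hne
  · simp [edgeHoms]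
  obtain ⟨a, b, hab, he, hleaf⟩ := hF.exists_leaf hF2 hne
  have ih' := ih _ (erase_ssubset he) (fun e he' => hF2 e (mem_of_mem_erase he'))
    (hF.mono (erase_subset _ _))
  have hstep := card_edgeHoms_mul_card_le hH hdeg hab he hleaf
  set n := Fintype.card V
  rw [← card_erase_add_one he, pow_succ, pow_succ]
  calc #(edgeHoms F H) * (n ^ #(F.erase {a, b}) * n)
      = #(edgeHoms F H) * n * n ^ #(F.erase {a, b}) := by ring
    _ ≤ #(edgeHoms (F.erase {a, b}) H) * d * n ^ #(F.erase {a, b}) := by gcongr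
    _ = d * (#(edgeHoms (F.erase {a, b}) H) * n ^ #(F.erase {a, b})) := by ring
    _ ≤ d * (d ^ #(F.erase {a, b}) * n ^ n) := by gcongr
    _ = d ^ #(F.erase {a, b}) * d * n ^ n := by ring

lemma card_perm_eqOn_le (W : Finset V) (g : V → V) :
    #{σ : Perm V | ∀ x ∈ W, σ x = g x} ≤ (Fintype.card V - #W)! := by
  rcases Finset.eq_empty_or_nonempty {σ : Perm V | ∀ x ∈ W, σ x = g x} with h | ⟨σ₀, hσ₀⟩
  · simp [h]
  rw [mem_filter] at hσ₀
  calc _ ≤ #{τ : Perm V | ∀ x, ¬x ∉ W → τ x = x} :=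
        card_le_card_of_injOn (σ₀⁻¹ * ·) (fun σ hσ => by
          rw [mem_coe, mem_filter] at hσ
          refine mem_filter.2 ⟨mem_univ _, fun x hx => ?_⟩
          rw [not_not] at hx
          rw [Perm.mul_apply, hσ.2 x hx, ← hσ₀.2 x hx, Perm.inv_eq_iff_eq])
          (mul_right_injective _).injOn
    _ = Fintype.card (Perm {x // x ∉ W}) := by
        rw [← Fintype.card_subtype, Fintype.card_congr (Perm.subtypeEquivSubtypePerm _)]
    _ = (Fintype.card V - #W)! := by
        rw [Fintype.card_perm, Fintype.card_subtype_compl, Fintype.card_coe]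

lemma card_perm_mul_pow_le_card_edgeHoms_mul {W : Finset V} (hW : ∀ e ∈ F, e ⊆ W) :
    #{σ : Perm V | ∀ e ∈ F, e.image σ ∈ H} * Fintype.card V ^ (Fintype.card V - #W)
      ≤ #(edgeHoms F H) * (Fintype.card V - #W)! := by
  refine card_mul_le_card_mul (fun (σ : Perm V) g => ∀ x ∈ W, σ x = g x) (fun σ hσ => ?_)
    fun g _ => (card_le_card (monotone_filter_left _ (filter_subset _ _))).trans
      (card_perm_eqOn_le W g)
  rw [mem_filter] at hσ
  let extend (u : (Wᶜ : Finset V) → V) (x : V) : V := if h : x ∈ W then σ x else u ⟨x, by simpa⟩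
  have hinj : Function.Injective extend := fun u u' h => funext fun ⟨x, hx⟩ => by
    simpa [extend, (mem_compl.1 hx)] using congrFun h x
  calc Fintype.card V ^ (Fintype.card V - #W) = #(univ.image extend) := by
        rw [card_image_of_injective _ hinj, card_univ, Fintype.card_fun, Fintype.card_coe,
          card_compl]
    _ ≤ _ := card_le_card fun g hg => by
        obtain ⟨u, -, rfl⟩ := mem_image.1 hg
        refine mem_filter.2 ⟨mem_edgeHoms.2 fun e he => ?_, fun x hx => by simp [extend, hx]⟩
        rw [image_congr fun x hx => show extend u x = σ x by simp [extend, hW e he hx]]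
        exact hσ.2 e he

lemma card_perm_mul_pow_le_of_isForestEdges (hH : ∀ e ∈ H, #e = 2)
    (hdeg : ∀ v, #{e ∈ H | v ∈ e} ≤ d) (hF2 : ∀ e ∈ F, #e = 2) (hF : IsForestEdges F) :
    #{σ : Perm V | ∀ e ∈ F, e.image σ ∈ H} * Fintype.card V ^ #F
      ≤ d ^ #F * ((Fintype.card V - #(F.biUnion id))! * Fintype.card V ^ #(F.biUnion id)) := by
  set n := Fintype.card V
  set W := F.biUnion id
  have hsplit : n ^ n = n ^ #W * n ^ (n - #W) := by
    rw [← pow_add, Nat.add_sub_cancel' (card_le_univ W)]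
  have hpos : 0 < n ^ (n - #W) := by
    rcases n.eq_zero_or_pos with h | h
    · simp [h]
    · positivity
  refine Nat.le_of_mul_le_mul_right ?_ hpos
  calc #{σ : Perm V | ∀ e ∈ F, e.image σ ∈ H} * n ^ #F * n ^ (n - #W)
      = #{σ : Perm V | ∀ e ∈ F, e.image σ ∈ H} * n ^ (n - #W) * n ^ #F := by ring
    _ ≤ #(edgeHoms F H) * (n - #W)! * n ^ #F := Nat.mul_le_mul_right _ <|
        card_perm_mul_pow_le_card_edgeHoms_mul fun e he => subset_biUnion_of_mem id he
    _ = (n - #W)! * (#(edgeHoms F H) * n ^ #F) := by ring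
    _ ≤ (n - #W)! * (d ^ #F * n ^ n) :=
        Nat.mul_le_mul_left _ (card_edgeHoms_mul_pow_le hH hdeg hF2 hF)
    _ = d ^ #F * ((n - #W)! * n ^ #W) * n ^ (n - #W) := by rw [hsplit]; ring

lemma factorial_mul_pow_lt {n w : ℕ} (hw : 1 ≤ w) (hwn : w ≤ n) :
    ((n - w)! * n ^ w : ℝ) < Real.exp 1 ^ w * n ! := by
  have hprod : n ^ w * w ! ≤ w ^ w * n.descFactorial w := by
    have key : ∏ i ∈ range w, n * (w - i) ≤ ∏ i ∈ range w, w * (n - i) :=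
      prod_le_prod' fun i hi => by
        have : w * i ≤ n * i := Nat.mul_le_mul_right i hwn
        rw [Nat.mul_sub, Nat.mul_sub, mul_comm w n]
        omega
    simpa only [prod_mul_distrib, prod_const, card_range, ← Nat.descFactorial_eq_prod_range,
      Nat.descFactorial_self] using key
  have hstirling : (w : ℝ) ^ w < Real.exp 1 ^ w * w ! := by
    have hsqrt : 1 < √(2 * Real.pi * w) := by
      rw [Real.lt_sqrt zero_le_one, one_pow]
      have : (1 : ℝ) ≤ w := by exact_mod_cast hw
      nlinarith [Real.pi_gt_three]
    have := Stirling.le_factorial_stirling w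
    rw [div_pow] at this
    rw [← div_lt_iff₀' (by positivity)]
    exact lt_of_lt_of_le (lt_mul_of_one_lt_left (by positivity) hsqrt) this
  have hdesc : ((n - w)! * n.descFactorial w : ℝ) = n ! := by
    exact_mod_cast Nat.factorial_mul_descFactorial hwn
  have hprodR : (n ^ w * w ! : ℝ) ≤ w ^ w * n.descFactorial w := by exact_mod_cast hprod
  refine lt_of_mul_lt_mul_right ?_ (Nat.cast_nonneg (w !))
  calc ((n - w)! * n ^ w : ℝ) * w ! = (n - w)! * (n ^ w * w !) := by ring
    _ ≤ (n - w)! * (w ^ w * n.descFactorial w) := by gcongr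
    _ = w ^ w * n ! := by rw [← hdesc]; ring
    _ < Real.exp 1 ^ w * w ! * n ! := by gcongr
    _ = Real.exp 1 ^ w * n ! * w ! := by ring

lemma div_factorial_lt_of_mul_pow_le {M n d f w : ℕ} (hd : 0 < d) (hw : 1 ≤ w) (hwn : w ≤ n)
    (hwf : w ≤ 2 * f) (h : M * n ^ f ≤ d ^ f * ((n - w)! * n ^ w)) :
    (M : ℝ) / n ! < (Real.exp 1 ^ 2 * d / n) ^ f := by
  have hn : (0 : ℝ) < n := by exact_mod_cast hw.trans hwn
  calc (M : ℝ) / n ! = M * n ^ f / (n ! * n ^ f) := by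
        rw [mul_div_mul_right _ _ (by positivity)]
    _ ≤ d ^ f * ((n - w)! * n ^ w) / (n ! * n ^ f) := by
        gcongr ?_ / _; exact_mod_cast h
    _ < d ^ f * (Real.exp 1 ^ w * n !) / (n ! * n ^ f) := by
        gcongr _ * ?_ / _; exact factorial_mul_pow_lt hw hwn
    _ ≤ d ^ f * (Real.exp 1 ^ (2 * f) * n !) / (n ! * n ^ f) := by
        gcongr; exact Real.one_le_exp zero_le_one
    _ = (Real.exp 1 ^ 2 * d / n) ^ f := by
        rw [div_pow, mul_pow, ← pow_mul]; field_simp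

end

open scoped Classical in
/-- If `S` is a nonempty graph on vertices inside `V` (`|V| = n`) with maximum forest size
`f`, isomorphic to a subgraph of a graph `H₀` on `V` with maximum degree at most `d`, and
`σ` is a uniformly random permutation of `V`, then `P(σ(S) ⊆ H₀) < (e²d/n)^f`. -/
theorem stmt14 {V : Type*} [Fintype V] [DecidableEq V] (n d : ℕ)
    (hn : Fintype.card V = n)
    (S H₀ : Finset (Finset V))
    (hS2 : ∀ e ∈ S, e.card = 2) (hH2 : ∀ e ∈ H₀, e.card = 2)
    (hSne : S.Nonempty)
    (hdeg : ∀ v : V, (H₀.filter (fun e => v ∈ e)).card ≤ d)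
    (hemb : ∃ φ : V → V, Function.Injective φ ∧ ∀ e ∈ S, e.image φ ∈ H₀)
    (f : ℕ) (hf : f = (S.powerset.filter IsForestEdges).sup Finset.card) :
    ((Finset.univ.filter
        (fun σ : Equiv.Perm V => ∀ e ∈ S, e.image σ ∈ H₀)).card : ℝ)
        / (Fintype.card (Equiv.Perm V))
      < (Real.exp 1 ^ 2 * d / n) ^ f := by
  subst hn
  obtain ⟨e₀, he₀⟩ := hSne
  obtain ⟨φ, -, hφ⟩ := hemb
  have hd : 0 < d := by
    obtain ⟨v, hv⟩ := card_pos.1 (by rw [hH2 _ (hφ e₀ he₀)]; omega : 0 < #(e₀.image φ))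
    exact (card_pos.2 ⟨_, mem_filter.2 ⟨hφ e₀ he₀, hv⟩⟩).trans_le (hdeg v)
  have hf1 : 1 ≤ f := hf ▸ le_sup (f := card) (mem_filter.2
    ⟨mem_powerset.2 (singleton_subset_iff.2 he₀), IsForestEdges.singleton (hS2 e₀ he₀)⟩)
  obtain ⟨F, hFS, hF, rfl⟩ : ∃ F ⊆ S, IsForestEdges F ∧ #F = f :=
    hf ▸ exists_forest_card_eq_sup S
  have hF2 : ∀ e ∈ F, #e = 2 := fun e he => hS2 e (hFS he)
  have hW : 1 ≤ #(F.biUnion id) := (Nat.le_add_left 1 _).trans (hF F le_rfl (card_pos.1 hf1))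
  rw [Fintype.card_perm]
  calc _ ≤ (#{σ : Equiv.Perm V | ∀ e ∈ F, e.image σ ∈ H₀} : ℝ) / (Fintype.card V).factorial :=
        div_le_div_of_nonneg_right (Nat.cast_le.2 <| card_le_card <|
          monotone_filter_right _ fun σ _ hσ e he => hσ e (hFS he)) (Nat.cast_nonneg _)
    _ < _ := div_factorial_lt_of_mul_pow_le hd hW (card_le_univ _) (card_biUnion_le_two_mul hF2)
        (card_perm_mul_pow_le_of_isForestEdges hH2 hdeg hF2 hF)
end

section
/- Let d ≥ 1 and let S be a connected graph on w vertices with s edges such that every vertex degree in S is at most d and S is not isomorphic to K_{d+1}. Then (w−1)/s ≥ 2(d+1)/((d+2)d). -/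
open Finset

lemma two_mul_choose_two' (n : ℕ) : 2 * n.choose 2 = n * (n - 1) := by
  rw [Nat.choose_two_right]
  have h : 2 ∣ n * (n - 1) := by
    rcases Nat.even_or_odd n with h | h
    · exact Dvd.dvd.mul_right h.two_dvd _
    · obtain ⟨k, hk⟩ := h
      exact Dvd.dvd.mul_left ⟨k, by omega⟩ _
  exact Nat.mul_div_cancel' h

open scoped Classical in
/-- A connected graph `S` on `w ≥ 2` vertices with `s` edges, all degrees at most `d`,
not isomorphic to `K_{d+1}`, satisfies `(w-1)/s ≥ 2(d+1)/((d+2)d)`. -/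
theorem stmt15 {V : Type*} [Fintype V] [DecidableEq V] (d : ℕ) (hd : 1 ≤ d)
    (S : SimpleGraph V) [DecidableRel S.Adj]
    (hconn : S.Connected)
    (hw : 2 ≤ Fintype.card V)
    (hdeg : ∀ v : V, S.degree v ≤ d)
    (hnotK : ¬ (Fintype.card V = d + 1 ∧ S = ⊤)) :
    (2 * ((d : ℝ) + 1)) / (((d : ℝ) + 2) * d)
      ≤ ((Fintype.card V : ℝ) - 1) / (S.edgeFinset.card : ℝ) := by
  set w := Fintype.card V with hwdef
  set s := S.edgeFinset.card with hsdef
  -- s ≥ 1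
  have hs1 : 1 ≤ s := by
    obtain ⟨u, v, huv⟩ := Fintype.exists_pair_of_one_lt_card (α := V) (by omega)
    obtain ⟨p⟩ := hconn.preconnected u v
    cases p with
    | nil => exact absurd rfl huv
    | cons h _ =>
      have : 0 < S.degree u := S.degree_pos_iff_exists_adj u |>.2 ⟨_, h⟩
      have h2 : ∑ x : V, S.degree x = 2 * s := S.sum_degrees_eq_twice_card_edges
      by_contra hc
      have hs0 : s = 0 := by omega
      rw [hs0, Nat.mul_zero] at h2
      have := Finset.sum_eq_zero_iff_of_nonneg (fun x _ => Nat.zero_le _) |>.1 h2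
        u (Finset.mem_univ u)
      omega
  -- degree sum bound: 2s ≤ w d
  have hds : 2 * s ≤ w * d := by
    have h2 : ∑ x : V, S.degree x = 2 * s := S.sum_degrees_eq_twice_card_edges
    calc 2 * s = ∑ x : V, S.degree x := h2.symm
      _ ≤ ∑ _x : V, d := Finset.sum_le_sum (fun x _ => hdeg x)
      _ = w * d := by simp [hwdef, mul_comm]
  -- complete graph bound: 2s ≤ w(w-1)
  have hch : 2 * s ≤ w * (w - 1) := by
    have := S.card_edgeFinset_le_card_choose_two
    rw [← hwdef] at this
    calc 2 * s ≤ 2 * w.choose 2 := by omega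
      _ = w * (w - 1) := two_mul_choose_two' w
  -- key natural inequality
  have key : 2 * s * (d + 1) ≤ (w - 1) * ((d + 2) * d) := by
    rcases le_or_gt w d with hle | hgt
    · -- w ≤ d
      have h1 : 2 * s * (d + 1) ≤ w * (w - 1) * (d + 1) :=
        Nat.mul_le_mul_right _ hch
      calc 2 * s * (d + 1) ≤ w * (w - 1) * (d + 1) := h1
        _ = (w - 1) * (w * (d + 1)) := by ring
        _ ≤ (w - 1) * ((d + 2) * d) := by
            apply Nat.mul_le_mul_left
            nlinarith
    · rcases le_or_gt (d + 2) w with hge | heq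
      · -- w ≥ d + 2
        have h1 : 2 * s * (d + 1) ≤ w * d * (d + 1) := Nat.mul_le_mul_right _ hds
        calc 2 * s * (d + 1) ≤ w * d * (d + 1) := h1
          _ ≤ (w - 1) * ((d + 2) * d) := by
            have hw1 : 1 ≤ w := by omega
            zify [hw1]
            nlinarith [hge, hw1]
      · -- w = d + 1
        have hwd : w = d + 1 := by omega
        have hne : S ≠ ⊤ := fun h => hnotK ⟨hwd, h⟩
        have hlt : s < w.choose 2 := by
          have hle' : s ≤ w.choose 2 := by
            have := S.card_edgeFinset_le_card_choose_two
            rwa [← hwdef] at this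
          rcases lt_or_eq_of_le hle' with h | h
          · exact h
          · exfalso
            apply hne
            rw [← SimpleGraph.edgeFinset_inj]
            apply Finset.eq_of_subset_of_card_le
            · exact SimpleGraph.edgeFinset_mono le_top
            · rw [SimpleGraph.card_edgeFinset_top_eq_card_choose_two, ← h]
        have h2s : 2 * s + 2 ≤ w * (w - 1) := by
          have := two_mul_choose_two' w
          omega
        rw [hwd] at h2s ⊢
        simp only [Nat.add_sub_cancel] at h2s ⊢
        nlinarith
  -- transfer to reals
  have hd' : (0:ℝ) < (d:ℝ) := by exact_mod_cast hd
  have hs' : (0:ℝ) < (s:ℝ) := by exact_mod_cast hs1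
  rw [div_le_div_iff₀ (by positivity) hs']
  have hw1 : 1 ≤ w := by omega
  have key' : (2 * s * (d + 1) : ℝ) ≤ ((w:ℝ) - 1) * ((d + 2) * d) := by
    have := key
    zify [hw1] at this
    exact_mod_cast this
  nlinarith [key']
end

section
/- Let d ≥ 1 and let H be a graph on n vertices with maximum degree at most d having no connected component isomorphic to K_{d+1}. Then every subgraph S of H without isolated vertices, with s edges and maximum forest size f, satisfies f/s ≥ 2/(d+1) + 1/((d+2)(d+1)d). -/
/-!
A spanning forest of `S` has `|V| - c(S)` edges, `c(S)` being the number of components of `S`.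
By the handshake lemma it therefore suffices to show `ρ · D ≤ 2 (w - 1)` for every component
with `w` vertices and degree sum `D`, where `ρ = 2/(d+1) + 1/((d+2)(d+1)d)`. Such a component has
`D ≤ w (w - 1)` and `D ≤ w d`, and `D < (d + 1) d` when `w = d + 1`: otherwise it is `d`-regular,
hence a `K_{d+1}` that is also a component of `H ≥ S`. In each of the regimes `w ≤ d`, `w = d + 1`
and `w ≥ d + 2` one of these bounds gives the inequality.
-/

open Finset

noncomputable def forestRatioBound (d : ℕ) : ℝ :=
  2 / ((d : ℝ) + 1) + 1 / (((d : ℝ) + 2) * ((d : ℝ) + 1) * d)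

namespace forestRatioBound

variable {d : ℕ}

lemma mul_le (hd : 1 ≤ d) : forestRatioBound d * d ≤ 2 * ((d : ℝ) + 1) / ((d : ℝ) + 2) := by
  have hd : (1 : ℝ) ≤ d := by exact_mod_cast hd
  unfold forestRatioBound
  rw [div_add_div _ _ (by positivity) (by positivity), div_mul_eq_mul_div,
    div_le_div_iff₀ (by positivity) (by positivity)]
  nlinarith [sq_nonneg (d : ℝ)]

lemma mul_succ_mul_self (hd : 1 ≤ d) :
    forestRatioBound d * (((d : ℝ) + 1) * d) = 2 * d + 1 / ((d : ℝ) + 2) := by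
  have hd : (1 : ℝ) ≤ d := by exact_mod_cast hd
  unfold forestRatioBound
  field_simp

lemma one_div_le : 1 / ((d : ℝ) + 2) ≤ forestRatioBound d := by
  unfold forestRatioBound
  have : 1 / ((d : ℝ) + 2) ≤ 2 / ((d : ℝ) + 1) := by
    rw [div_le_div_iff₀ (by positivity) (by positivity)]
    linarith
  have : 0 ≤ 1 / (((d : ℝ) + 2) * ((d : ℝ) + 1) * d) := by positivity
  linarith

lemma mul_le_two_mul_sub_one {w D : ℕ} (hw : 1 ≤ w) (hDw : D + w ≤ w * w) (hDd : D ≤ w * d)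
    (hK : w = d + 1 → D < (d + 1) * d) :
    forestRatioBound d * D ≤ 2 * ((w : ℝ) - 1) := by
  rcases Nat.eq_zero_or_pos D with rfl | hD
  · have : (1 : ℝ) ≤ w := by exact_mod_cast hw
    simp only [CharP.cast_eq_zero, mul_zero]
    linarith
  have hd : 1 ≤ d := Nat.pos_of_ne_zero (by rintro rfl; omega)
  have hc : 0 ≤ forestRatioBound d := le_trans (by positivity) one_div_le
  have hdR : (1 : ℝ) ≤ d := by exact_mod_cast hd
  rcases lt_trichotomy w (d + 1) with hwd | rfl | hwd
  · have hwd : (w : ℝ) ≤ d := by exact_mod_cast Nat.le_of_lt_succ hwd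
    have hDw : (D : ℝ) ≤ w * ((w : ℝ) - 1) := by
      have : (D : ℝ) + w ≤ w * w := by exact_mod_cast hDw
      linarith
    have hw1 : (0 : ℝ) ≤ w - 1 := by
      have : (1 : ℝ) ≤ w := by exact_mod_cast hw
      linarith
    have hratio : 2 * ((d : ℝ) + 1) / ((d : ℝ) + 2) ≤ 2 := by
      rw [div_le_iff₀ (by positivity)]
      linarith
    calc forestRatioBound d * D ≤ forestRatioBound d * (w * ((w : ℝ) - 1)) := by gcongr
      _ ≤ forestRatioBound d * d * ((w : ℝ) - 1) := by rw [← mul_assoc]; gcongr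
      _ ≤ 2 * ((w : ℝ) - 1) := by gcongr; exact (mul_le hd).trans hratio
  · have hD : (D : ℝ) ≤ ((d : ℝ) + 1) * d - 1 := by
      have : D + 1 ≤ (d + 1) * d := hK rfl
      have : (D : ℝ) + 1 ≤ ((d : ℝ) + 1) * d := by exact_mod_cast this
      linarith
    calc forestRatioBound d * D ≤ forestRatioBound d * (((d : ℝ) + 1) * d - 1) := by gcongr
      _ = 2 * d + 1 / ((d : ℝ) + 2) - forestRatioBound d := by
        rw [mul_sub, mul_succ_mul_self hd, mul_one]
      _ ≤ 2 * (((d + 1 : ℕ) : ℝ) - 1) := by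
        push_cast
        linarith [one_div_le (d := d)]
  · have hwd : (d : ℝ) + 2 ≤ w := by exact_mod_cast hwd
    have hDd : (D : ℝ) ≤ w * d := by exact_mod_cast hDd
    calc forestRatioBound d * D ≤ forestRatioBound d * d * w := by
          rw [mul_assoc, mul_comm (d : ℝ)]; gcongr
      _ ≤ 2 * ((d : ℝ) + 1) / ((d : ℝ) + 2) * w := by gcongr; exact mul_le hd
      _ ≤ 2 * ((w : ℝ) - 1) := by
        rw [div_mul_eq_mul_div, div_le_iff₀ (by positivity)]
        nlinarith

end forestRatioBound

namespace SimpleGraph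

variable {V : Type*} [Fintype V]

section Forest

variable [DecidableEq V] (G : SimpleGraph V) [Fintype G.edgeSet]

/-- Each non-root vertex is sent to the first edge of a shortest walk to its root; the distance
to the root strictly drops along that edge, which makes the assignment injective. -/
lemma card_le_card_edgeFinset_add_card_filter_eq (root : V → V)
    (hreach : ∀ v, G.Reachable v (root v)) (hroot : ∀ u v, G.Adj u v → root u = root v) :
    Fintype.card V ≤ #G.edgeFinset + #{v | v = root v} := by
  have hstep : ∀ v, ∃ u, v ≠ root v → G.Adj v u ∧ G.dist u (root u) < G.dist v (root v) := by
    intro v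
    by_cases hv : v = root v
    · exact ⟨v, fun h => (h hv).elim⟩
    obtain ⟨p, hp⟩ := (hreach v).exists_walk_length_eq_dist
    obtain ⟨u, huv, q, rfl⟩ := Walk.exists_eq_cons_of_ne hv p
    refine ⟨u, fun _ => ⟨huv, ?_⟩⟩
    rw [← hroot v u huv, ← hp, Walk.length_cons]
    exact Nat.lt_succ_of_le (dist_le q)
  choose next hnext using hstep
  rw [← card_univ, ← card_filter_add_card_filter_not (s := univ) (fun v => v = root v), add_comm]
  gcongr
  refine card_le_card_of_injOn (fun v => s(v, next v)) (fun v hv => ?_) (fun v hv w hw hvw => ?_)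
  · simpa using (hnext v (mem_filter.1 hv).2).1
  · have hv := (hnext v (mem_filter.1 hv).2).2
    have hw := (hnext w (mem_filter.1 hw).2).2
    rcases Sym2.eq_iff.1 hvw with ⟨h, -⟩ | ⟨hvnw, hnvw⟩
    · exact h
    · rw [hnvw] at hv
      rw [← hvnw] at hw
      omega

variable (S : SimpleGraph V) [DecidableRel S.Adj] [Fintype S.ConnectedComponent]

lemma exists_isAcyclic_card_le_card_add_card_connectedComponent :
    ∃ F ⊆ S.edgeFinset, (fromEdgeSet (F : Set (Sym2 V))).IsAcyclic ∧
      Fintype.card V ≤ #F + Fintype.card S.ConnectedComponent := by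
  obtain ⟨F, hFS, hFacyc, hFreach⟩ := S.exists_isAcyclic_reachable_eq_le
  let := Classical.decRel F.Adj
  choose rep hrep using fun K : S.ConnectedComponent => K.exists_rep
  let root : V → V := fun v => rep (S.connectedComponentMk v)
  have hcount := F.card_le_card_edgeFinset_add_card_filter_eq root
    (fun v => hFreach ▸ ConnectedComponent.exact (hrep _).symm)
    fun u v huv => by simp only [root, ConnectedComponent.connectedComponentMk_eq_of_adj (hFS huv)]
  have hroots : ({v | v = root v} : Finset V) = univ.image rep := by
    ext v
    simp only [mem_filter, mem_univ, true_and, mem_image]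
    refine ⟨fun h => ⟨_, h.symm⟩, ?_⟩
    rintro ⟨K, rfl⟩
    exact congrArg rep (hrep K).symm
  rw [hroots, card_image_of_injective _ (Function.LeftInverse.injective hrep), card_univ] at hcount
  exact ⟨F.edgeFinset, edgeFinset_subset_edgeFinset.2 hFS, by simpa using hFacyc, hcount⟩

end Forest

section Degree

variable {G H S : SimpleGraph V} [DecidableRel G.Adj] [DecidableRel H.Adj] [DecidableRel S.Adj]
  {W : Finset V} {d : ℕ}

lemma neighborFinset_subset_erase [DecidableEq V] (hW : ∀ u ∈ W, ∀ v, G.Adj u v → v ∈ W) {v : V}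
    (hv : v ∈ W) :
    G.neighborFinset v ⊆ W.erase v := fun u hu =>
  have hvu : G.Adj v u := (G.mem_neighborFinset v u).1 hu
  mem_erase.2 ⟨hvu.ne.symm, hW v hv u hvu⟩

lemma degree_lt_card (hW : ∀ u ∈ W, ∀ v, G.Adj u v → v ∈ W) {v : V} (hv : v ∈ W) :
    G.degree v < #W := by
  classical
  rw [← card_neighborFinset_eq_degree]
  exact (card_le_card (neighborFinset_subset_erase hW hv)).trans_lt (card_erase_lt_of_mem hv)

lemma neighborFinset_eq_erase_of_card_mul_le_sum_degree [DecidableEq V]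
    (hdeg : ∀ v, H.degree v ≤ d) (hSH : S ≤ H) (hW : ∀ u ∈ W, ∀ v, S.Adj u v → v ∈ W)
    (hcard : #W = d + 1) (hsum : #W * d ≤ ∑ v ∈ W, S.degree v) :
    ∀ v ∈ W, H.neighborFinset v = W.erase v := by
  intro v hv
  have hSv : S.degree v = d := by
    have hle : ∀ u ∈ W, S.degree u ≤ d := fun u _ => (degree_le_of_le hSH).trans (hdeg u)
    refine (sum_eq_sum_iff_of_le hle).1 (le_antisymm ?_ ?_) v hv
    · exact sum_le_sum hle
    · simpa [sum_const, smul_eq_mul] using hsum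
  have hSW : S.neighborFinset v = W.erase v :=
    eq_of_subset_of_card_le (neighborFinset_subset_erase hW hv) (by
      rw [card_erase_of_mem hv, card_neighborFinset_eq_degree]
      omega)
  have hSH_nbr : S.neighborFinset v = H.neighborFinset v :=
    eq_of_subset_of_card_le (fun u hu => by simpa using hSH (by simpa using hu)) (by
      rw [card_neighborFinset_eq_degree, card_neighborFinset_eq_degree]
      exact hSv ▸ hdeg v)
  rw [← hSH_nbr, hSW]

lemma forestRatioBound_mul_sum_degree_le (hdeg : ∀ v, H.degree v ≤ d)
    (hnoK : ¬ ∃ W : Finset V, #W = d + 1 ∧ (∀ u ∈ W, ∀ v ∈ W, u ≠ v → H.Adj u v) ∧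
      (∀ u ∈ W, ∀ v, H.Adj u v → v ∈ W))
    (hSH : S ≤ H) (hW : ∀ u ∈ W, ∀ v, S.Adj u v → v ∈ W) (hne : W.Nonempty) :
    forestRatioBound d * (∑ v ∈ W, S.degree v : ℕ) ≤ 2 * ((#W : ℝ) - 1) := by
  refine forestRatioBound.mul_le_two_mul_sub_one hne.card_pos ?_ ?_ ?_
  · calc ∑ v ∈ W, S.degree v + #W = ∑ v ∈ W, (S.degree v + 1) := by
          rw [sum_add_distrib, sum_const, smul_eq_mul, mul_one]
      _ ≤ ∑ _v ∈ W, #W := sum_le_sum fun v hv => degree_lt_card hW hv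
      _ = #W * #W := by rw [sum_const, smul_eq_mul]
  · calc ∑ v ∈ W, S.degree v ≤ ∑ _v ∈ W, d :=
          sum_le_sum fun v _ => (degree_le_of_le hSH).trans (hdeg v)
      _ = #W * d := by rw [sum_const, smul_eq_mul]
  · classical
    intro hcard
    by_contra! hsum
    have hnbr := neighborFinset_eq_erase_of_card_mul_le_sum_degree hdeg hSH hW hcard
      (hcard ▸ hsum)
    refine hnoK ⟨W, hcard, fun u hu v hv huv => ?_, fun u hu v huv => ?_⟩
    · rw [← mem_neighborFinset, hnbr u hu]
      exact mem_erase.2 ⟨huv.symm, hv⟩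
    · exact mem_of_mem_erase (hnbr u hu ▸ (H.mem_neighborFinset u v).2 huv)

end Degree

variable [DecidableEq V] (S : SimpleGraph V) [DecidableRel S.Adj] [Fintype S.ConnectedComponent]

lemma mul_card_edgeFinset_le_of_forall_connectedComponent {c : ℝ}
    (h : ∀ K : S.ConnectedComponent,
      c * (∑ v ∈ K.supp.toFinset, S.degree v : ℕ) ≤ 2 * ((#K.supp.toFinset : ℝ) - 1)) :
    c * #S.edgeFinset ≤ Fintype.card V - Fintype.card S.ConnectedComponent := by
  have hfiber (g : V → ℕ) :
      ∑ K : S.ConnectedComponent, ∑ v ∈ K.supp.toFinset, g v = ∑ v, g v := by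
    classical
    rw [← sum_fiberwise univ S.connectedComponentMk g]
    refine sum_congr rfl fun K _ => sum_congr ?_ fun _ _ => rfl
    ext v
    simp [ConnectedComponent.mem_supp_iff]
  have hdeg : ∑ K : S.ConnectedComponent, ((∑ v ∈ K.supp.toFinset, S.degree v : ℕ) : ℝ) =
      2 * #S.edgeFinset := by
    exact_mod_cast (hfiber fun v => S.degree v).trans S.sum_degrees_eq_twice_card_edges
  have hcard : ∑ K : S.ConnectedComponent, (#K.supp.toFinset : ℝ) = Fintype.card V := by
    exact_mod_cast (by simpa using hfiber 1)
  calc c * #S.edgeFinset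
      = (∑ K : S.ConnectedComponent, c * (∑ v ∈ K.supp.toFinset, S.degree v : ℕ)) / 2 := by
        rw [← mul_sum, hdeg]
        ring
    _ ≤ (∑ K : S.ConnectedComponent, 2 * ((#K.supp.toFinset : ℝ) - 1)) / 2 := by
        exact div_le_div_of_nonneg_right (sum_le_sum fun K _ => h K) zero_le_two
    _ = Fintype.card V - Fintype.card S.ConnectedComponent := by
        rw [← mul_sum, sum_sub_distrib, hcard, sum_const, card_univ, nsmul_one]
        ring

end SimpleGraph

open scoped Classical in
theorem stmt16_general {V : Type*} [Fintype V] [DecidableEq V] (d : ℕ)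
    (H : SimpleGraph V) [DecidableRel H.Adj]
    (hdeg : ∀ v : V, H.degree v ≤ d)
    (hnoK : ¬ ∃ W : Finset V, W.card = d + 1 ∧
      (∀ u ∈ W, ∀ v ∈ W, u ≠ v → H.Adj u v) ∧
      (∀ u ∈ W, ∀ v : V, H.Adj u v → v ∈ W))
    (S : SimpleGraph V) [DecidableRel S.Adj] (hSH : S ≤ H)
    (hs : S.edgeFinset.Nonempty)
    (f : ℕ)
    (hf : f = (S.edgeFinset.powerset.filter
      (fun F : Finset (Sym2 V) =>
        (SimpleGraph.fromEdgeSet (F : Set (Sym2 V))).IsAcyclic)).sup Finset.card) :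
    2 / ((d : ℝ) + 1) + 1 / (((d : ℝ) + 2) * ((d : ℝ) + 1) * d)
      ≤ (f : ℝ) / (S.edgeFinset.card : ℝ) := by
  obtain ⟨F, hFS, hFacyc, hVF⟩ := S.exists_isAcyclic_card_le_card_add_card_connectedComponent
  have hFf : #F ≤ f := hf ▸ le_sup (mem_filter.2 ⟨mem_powerset.2 hFS, hFacyc⟩)
  have hE := S.mul_card_edgeFinset_le_of_forall_connectedComponent fun K =>
    SimpleGraph.forestRatioBound_mul_sum_degree_le hdeg hnoK hSH
      (fun u hu v huv => by simpa using K.mem_supp_of_adj_mem_supp (by simpa using hu) huv)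
      (by simpa using K.nonempty_supp)
  have hV : (Fintype.card V : ℝ) ≤ f + Fintype.card S.ConnectedComponent := by
    exact_mod_cast hVF.trans (by omega)
  rw [le_div_iff₀ (by exact_mod_cast hs.card_pos)]
  change forestRatioBound d * _ ≤ _
  linarith

open scoped Classical in
/-- If `H` is a graph with maximum degree at most `d` (`d ≥ 1`) having no connected
component isomorphic to `K_{d+1}`, then every subgraph `S ≤ H` with at least one edge,
with `s` edges and maximum forest size `f`, satisfies
`f/s ≥ 2/(d+1) + 1/((d+2)(d+1)d)`. -/
theorem stmt16 {V : Type*} [Fintype V] [DecidableEq V] (d : ℕ) (hd : 1 ≤ d)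
    (H : SimpleGraph V) [DecidableRel H.Adj]
    (hdeg : ∀ v : V, H.degree v ≤ d)
    (hnoK : ¬ ∃ W : Finset V, W.card = d + 1 ∧
      (∀ u ∈ W, ∀ v ∈ W, u ≠ v → H.Adj u v) ∧
      (∀ u ∈ W, ∀ v : V, H.Adj u v → v ∈ W))
    (S : SimpleGraph V) [DecidableRel S.Adj] (hSH : S ≤ H)
    (hs : S.edgeFinset.Nonempty)
    (f : ℕ)
    (hf : f = (S.edgeFinset.powerset.filter
      (fun F : Finset (Sym2 V) =>
        (SimpleGraph.fromEdgeSet (F : Set (Sym2 V))).IsAcyclic)).sup Finset.card) :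
    2 / ((d : ℝ) + 1) + 1 / (((d : ℝ) + 2) * ((d : ℝ) + 1) * d)
      ≤ (f : ℝ) / (S.edgeFinset.card : ℝ) :=
  stmt16_general d H hdeg hnoK S hSH hs f hf
end
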